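/- arXiv:1305.5269 — 6 statements merged into one kernel-verified Lean document; each statement's English description precedes it below -/
import Mathlib

section
/- The complex algebra Cm F of the blown-up-and-blurred atom structure is not representable: there is no equivalence relation E on any set and no isomorphism from Cm F onto a subalgebra of the full set relation algebra ℘(E). -/
/-- A relation-type algebra: a Boolean algebra with composition, converse and identity. -/
structure RelAlgOps (A : Type*) [BooleanAlgebra A] where
  comp : A → A → A
  conv : A → A
  one' : A

/-- `h` is a representation of the relation-type algebra `R` over the equivalence
relation `E`: an isomorphism onto a subalgebra of the full set relation algebra `℘(E)`. -/
def IsRelRepresentation {A : Type*} [BooleanAlgebra A] (R : RelAlgOps A)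
    {X : Type*} (E : X → X → Prop) (h : A → Set (X × X)) : Prop :=
  Function.Injective h ∧
  (∀ a, h a ⊆ {p : X × X | E p.1 p.2}) ∧
  h ⊤ = {p : X × X | E p.1 p.2} ∧
  h ⊥ = ∅ ∧
  (∀ a b, h (a ⊔ b) = h a ∪ h b) ∧
  (∀ a, h aᶜ = {p : X × X | E p.1 p.2} \ h a) ∧
  (∀ a b, h (R.comp a b) =
    {p : X × X | E p.1 p.2 ∧ ∃ y, (p.1, y) ∈ h a ∧ (y, p.2) ∈ h b}) ∧
  (∀ a, h (R.conv a) = {p : X × X | (p.2, p.1) ∈ h a}) ∧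
  h R.one' = {p : X × X | E p.1 p.2 ∧ p.1 = p.2}

/-- A relation-type algebra is representable if it embeds in some `℘(E)`. -/
def IsRepresentable {A : Type*} [BooleanAlgebra A] (R : RelAlgOps A) : Prop :=
  ∃ (X : Type) (E : X → X → Prop), Equivalence E ∧
    ∃ h : A → Set (X × X), IsRelRepresentation R E h

/-- `i, j, k` are evenly distributed: some arrangement `p, q, r` of them
satisfies `r - q = q - p` (over the integers, i.e. `p + r = 2 * q`). -/
def evenly (i j k : ℕ) : Prop :=
  ∃ p q r : ℕ, ({p, q, r} : Set ℕ) = {i, j, k} ∧ p + r = 2 * q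

section Atoms
variable (I : Type) [Fintype I] [DecidableEq I]

/-- The two-element subsets of `I` (the blurs). -/
def TwoSet := {W : Finset I // W.card = 2}

/-- `H = {(i, P, W) : P ∈ W}`. -/
def Hset := {x : ℕ × I × TwoSet I // x.2.1 ∈ x.2.2.val}

/-- The atoms: `H` together with the identity atom. -/
def Atoms := Hset I ⊕ Unit

/-- The consistency (forbidden triple) relation on the atoms. -/
def ConTriple : Atoms I → Atoms I → Atoms I → Prop
  | Sum.inr _, b, c => b = c
  | a, Sum.inr _, c => a = c
  | a, b, Sum.inr _ => a = b
  | Sum.inl a, Sum.inl b, Sum.inl c =>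
      (a.val.2.2.val ∩ b.val.2.2.val ∩ c.val.2.2.val = ∅) ∨
      (evenly a.val.1 b.val.1 c.val.1 ∧
        ¬ (a.val.2.1 = b.val.2.1 ∧ b.val.2.1 = c.val.2.1))

/-- Composition in the complex algebra `Cm F`. -/
def cmComp (X Y : Set (Atoms I)) : Set (Atoms I) :=
  {c | ∃ a ∈ X, ∃ b ∈ Y, ConTriple I a b c}

/-- The complex algebra `Cm F` of the blown-up-and-blurred atom structure. -/
def cmAlg : RelAlgOps (Set (Atoms I)) where
  comp := cmComp I
  conv := id
  one' := {Sum.inr ()}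

end Atoms

/-!
Let `h` be a representation and `x` a point of its base. Each atom `a ∈ H` satisfies
`1' ≤ a ; a`, so it yields a point `y a` with `(x, y a) ∈ h {a}`; distinct atoms have disjoint
singletons, so they yield distinct points. Any two distinct points `y a`, `y b` are joined by an
edge of `h (C P)` for some colour `P ∈ I`, where `C P` is the set of atoms of colour `P`. With
infinitely many points and finitely many colours, Ramsey's theorem gives a triangle whose three
edges lie in the same `h (C P)`, so `h (C P)` meets `h (C P ; C P)`. But `C P` is disjoint from
`C P ; C P`: three atoms of colour `P` all have `P` in their blurs and all have the same colour,
so they form no consistent triple.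
-/

theorem exists_monochromatic_triangle {α β : Type*} (R : α → β → β → Prop) (C : Finset α)
    {S : Set β} (hS : S.Infinite) (hR : ∀ i ∈ S, ∀ j ∈ S, i ≠ j → ∃ c ∈ C, R c i j) :
    ∃ c i j k, R c i j ∧ R c j k ∧ R c i k := by
  classical
  induction C using Finset.strongInduction generalizing S with
  | H C ih =>
  obtain ⟨v, hv⟩ := hS.nonempty
  obtain ⟨c, hc, hT⟩ : ∃ c ∈ C, {j ∈ S \ {v} | R c v j}.Infinite := by
    by_contra! hfin
    refine (hS.sdiff (Set.finite_singleton v)) ((C.finite_toSet.biUnion hfin).subset ?_)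
    intro j hj
    obtain ⟨c, hc, hvj⟩ := hR v hv j hj.1 (Ne.symm hj.2)
    exact Set.mem_biUnion hc ⟨hj, hvj⟩
  -- Either the infinite `c`-neighbourhood of `v` contains a `c`-edge, or `c` is absent from it.
  by_cases hmono : ∃ j ∈ {j ∈ S \ {v} | R c v j}, ∃ k ∈ {j ∈ S \ {v} | R c v j}, R c j k
  · obtain ⟨j, hj, k, hk, hjk⟩ := hmono
    exact ⟨c, v, j, k, hj.2, hjk, hk.2⟩
  · refine ih (C.erase c) (C.erase_ssubset hc) hT fun j hj k hk hne => ?_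
    obtain ⟨c', hc', hjk⟩ := hR j hj.1.1 k hk.1.1 hne
    refine ⟨c', Finset.mem_erase.2 ⟨?_, hc'⟩, hjk⟩
    rintro rfl
    exact hmono ⟨j, hj, k, hk, hjk⟩

namespace IsRelRepresentation

variable {A : Type*} [BooleanAlgebra A] {R : RelAlgOps A} {X : Type*} {E : X → X → Prop}
  {h : A → Set (X × X)}

def toSupBotHom (hh : IsRelRepresentation R E h) : SupBotHom A (Set (X × X)) where
  toFun := h
  map_sup' := hh.2.2.2.2.1
  map_bot' := hh.2.2.2.1

theorem monotone (hh : IsRelRepresentation R E h) : Monotone h :=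
  OrderHomClass.mono hh.toSupBotHom

theorem mem_finset_sup {ι : Type*} (hh : IsRelRepresentation R E h) (s : Finset ι) (f : ι → A)
    {p : X × X} : p ∈ h (s.sup f) ↔ ∃ i ∈ s, p ∈ h (f i) := by
  change p ∈ hh.toSupBotHom (s.sup f) ↔ _
  simp only [map_finset_sup, Finset.sup_set_eq_biUnion, Set.mem_iUnion₂, exists_prop]
  rfl

theorem disjoint (hh : IsRelRepresentation R E h) {a b : A} (hab : Disjoint a b) :
    Disjoint (h a) (h b) := by
  have hb : h b ⊆ h aᶜ := hh.monotone (le_compl_iff_disjoint_left.2 hab)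
  obtain ⟨-, -, -, -, -, hcompl, -⟩ := hh
  rw [hcompl] at hb
  exact Set.disjoint_of_subset_right hb Set.disjoint_sdiff_right

theorem rel_of_mem (hh : IsRelRepresentation R E h) {a : A} {p : X × X} (hp : p ∈ h a) :
    E p.1 p.2 :=
  hh.2.1 a hp

theorem nonempty [Nontrivial A] (hh : IsRelRepresentation R E h) : Nonempty X := by
  obtain ⟨hinj, -, -, hbot, -⟩ := hh
  by_contra hX
  rw [not_nonempty_iff] at hX
  exact top_ne_bot (hinj ((Set.eq_empty_of_isEmpty _).trans hbot.symm))

theorem exists_mem_of_one_le_comp (hh : IsRelRepresentation R E h) {a b : A}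
    (hab : R.one' ≤ R.comp a b) {x : X} (hx : E x x) : ∃ y, (x, y) ∈ h a := by
  have hmono := hh.monotone hab
  obtain ⟨-, -, -, -, -, -, hcomp, -, hone⟩ := hh
  rw [hone, hcomp] at hmono
  obtain ⟨-, y, hxy, -⟩ := hmono (show (x, x) ∈ _ from ⟨hx, rfl⟩)
  exact ⟨y, hxy⟩

theorem mem_comp (hh : IsRelRepresentation R E h) (hE : Equivalence E) {a b : A} {x y z : X}
    (hxy : (x, y) ∈ h a) (hyz : (y, z) ∈ h b) : (x, z) ∈ h (R.comp a b) := by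
  have hxz : E x z := hE.trans (hh.rel_of_mem hxy) (hh.rel_of_mem hyz)
  obtain ⟨-, -, -, -, -, -, hcomp, -⟩ := hh
  rw [hcomp]
  exact ⟨hxz, y, hxy, hyz⟩

theorem exists_mem_of_top_eq_one_sup (hh : IsRelRepresentation R E h) {ι : Type*}
    {s : Finset ι} {f : ι → A} (hcover : ⊤ = R.one' ⊔ s.sup f) {x y : X} (hxy : E x y)
    (hne : x ≠ y) : ∃ i ∈ s, (x, y) ∈ h (f i) := by
  rw [← hh.mem_finset_sup]
  obtain ⟨-, -, htop, -, hsup, -, -, -, hone⟩ := hh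
  have hmem : (x, y) ∈ h ⊤ := by rw [htop]; exact hxy
  rw [hcover, hsup, hone] at hmem
  exact hmem.resolve_left fun hdiag => hne hdiag.2

end IsRelRepresentation

section CmAlg

variable {I : Type}

instance : Nonempty (Atoms I) := ⟨Sum.inr ()⟩

theorem Hset.infinite [Fintype I] (hI : 2 ≤ Fintype.card I) : Infinite (Hset I) := by
  obtain ⟨W, -, hW⟩ := Finset.exists_subset_card_eq (s := (Finset.univ : Finset I)) hI
  obtain ⟨P, hP⟩ := Finset.card_pos.1 (hW ▸ two_pos : 0 < W.card)
  exact Infinite.of_injective (fun n : ℕ => (⟨(n, P, ⟨W, hW⟩), hP⟩ : Hset I))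
    fun m n hmn => congrArg (fun s : Hset I => s.val.1) hmn

theorem one_le_cmComp_singleton [DecidableEq I] (s : Hset I) :
    (cmAlg I).one' ≤ (cmAlg I).comp {Sum.inl s} {Sum.inl s} := by
  rintro _ rfl
  exact ⟨Sum.inl s, rfl, Sum.inl s, rfl, rfl⟩

def colorClass (P : I) : Set (Atoms I) := Sum.inl '' {s : Hset I | s.val.2.1 = P}

theorem top_eq_one_sup_colorClass [Fintype I] [DecidableEq I] :
    (⊤ : Set (Atoms I)) = (cmAlg I).one' ⊔ Finset.univ.sup colorClass := by
  refine (Set.eq_univ_of_forall fun a => ?_).symm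
  rcases a with s | ⟨⟩
  · exact Or.inr (Finset.le_sup (f := colorClass) (Finset.mem_univ s.val.2.1) ⟨s, rfl, rfl⟩)
  · exact Or.inl rfl

theorem disjoint_colorClass_comp [DecidableEq I] (P : I) :
    Disjoint (colorClass P) ((cmAlg I).comp (colorClass P) (colorClass P)) := by
  rw [Set.disjoint_left]
  rintro _ ⟨c, hc, rfl⟩ ⟨_, ⟨a, ha, rfl⟩, _, ⟨b, hb, rfl⟩, hcon⟩
  rcases hcon with hblur | ⟨-, hcolor⟩
  · have hP : P ∈ a.val.2.2.val ∩ b.val.2.2.val ∩ c.val.2.2.val := by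
      simp only [Finset.mem_inter]
      exact ⟨⟨ha ▸ a.prop, hb ▸ b.prop⟩, hc ▸ c.prop⟩
    rw [hblur] at hP
    exact Finset.notMem_empty P hP
  · exact hcolor ⟨ha.trans hb.symm, hb.trans hc.symm⟩

end CmAlg

/-- the complex algebra `Cm F` of the blown-up-and-blurred atom structure
is not representable. -/
theorem cmAlg_not_representable (I : Type) [Fintype I] [DecidableEq I]
    (hI : 6 ≤ Fintype.card I) :
    ¬ IsRepresentable (cmAlg I) := by
  rintro ⟨X, E, hE, h, hh⟩
  obtain ⟨x⟩ := hh.nonempty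
  have := Hset.infinite (I := I) (by omega)
  choose y hy using fun s : Hset I =>
    hh.exists_mem_of_one_le_comp (one_le_cmComp_singleton s) (hE.refl x)
  have hy_inj : Function.Injective y := by
    intro s t hst
    by_contra hne
    have hdisj := hh.disjoint (Set.disjoint_singleton.2 (Sum.inl_injective.ne hne))
    exact Set.disjoint_left.1 hdisj (hy s) (hst ▸ hy t)
  have hy_rel : ∀ s t, E (y s) (y t) := fun s t =>
    hE.trans (hE.symm (hh.rel_of_mem (hy s))) (hh.rel_of_mem (hy t))
  obtain ⟨P, a, b, c, hab, hbc, hac⟩ :=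
    exists_monochromatic_triangle (fun P a b => (a, b) ∈ h (colorClass P)) Finset.univ
      (Set.infinite_range_of_injective hy_inj) (by
        rintro _ ⟨s, rfl⟩ _ ⟨t, rfl⟩ hne
        exact hh.exists_mem_of_top_eq_one_sup top_eq_one_sup_colorClass (hy_rel s t) hne)
  exact Set.disjoint_left.1 (hh.disjoint (disjoint_colorClass_comp P)) hac (hh.mem_comp hE hab hbc)
end

section
/- The term algebra R over the blown-up-and-blurred atom structure, i.e. the collection R = {X ⊆ At : for every W ∈ J, X ∩ E^W is finite or E^W ∖ X is finite}, is closed under the operations of the complex algebra Cm F (unions, complements, composition ;, converse ˘, and it contains 1' = {Id} and the unit At), and the resulting relation-type algebra is representable. -/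
section Term
variable (I : Type) [Fintype I] [DecidableEq I]

/-- The block `E^W = {(i, P, W) : i ∈ ℕ, P ∈ W}` of the second partition. -/
def Eset (W : TwoSet I) : Set (Atoms I) :=
  {a | ∃ x : Hset I, a = Sum.inl x ∧ x.val.2.2 = W}

/-- The universe of the term algebra: sets intersecting each `E^W` finitely or
cofinitely (within `E^W`). -/
def TermAlg : Set (Set (Atoms I)) :=
  {X | ∀ W : TwoSet I, (X ∩ Eset I W).Finite ∨ (Eset I W \ X).Finite}

end Term

/-!
The ultrafilters of the term algebra are the principal ones and, for each blur `W`, the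
ultrafilter of sets cofinite in `E^W`. For `X, Y` in the term algebra, `X ; Y` belongs to
an ultrafilter `w` iff `X ∈ u` and `Y ∈ v` for a consistent triangle `(u, v, w)`. The key
dichotomy is on blocks: an atom of index `i` composed with a cofinite part of `E^Z` reaches
every atom of large index `k` through the atom of index `2k - i`, whereas finitely many
atoms only reach finitely many indices, since `e(i, j, k)` forces `k ≤ 2(i + j)`. The same
dichotomy shows that the term algebra is closed under composition.

A representation is then a complete graph on `ℕ` labelled by ultrafilters in which every
triangle is consistent and every consistent triangle over an edge is realised. It is built
step by step: each new vertex serves one request and is joined to all other vertices by a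
blur disjoint from the blocks of the two requested labels, which exists because `|I| ≥ 6`.
-/

section Basic
variable {I : Type} [DecidableEq I]

lemma evenly_comm₁₂ {i j k : ℕ} : evenly i j k ↔ evenly j i k := by
  simp only [evenly, Set.insert_comm i j]

lemma evenly_comm₂₃ {i j k : ℕ} : evenly i j k ↔ evenly i k j := by
  simp only [evenly, Set.pair_comm j k]

lemma evenly_of_add_eq {i j k : ℕ} (h : i + j = 2 * k) : evenly i j k :=
  ⟨i, k, j, by rw [Set.pair_comm k j], h⟩

lemma evenly.le_two_mul_add {i j k : ℕ} (h : evenly i j k) : k ≤ 2 * (i + j) := by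
  obtain ⟨p, q, r, hs, hpr⟩ := h
  have mem : ∀ x, x = p ∨ x = q ∨ x = r ↔ x = i ∨ x = j ∨ x = k := fun x => by
    simpa using Set.ext_iff.mp hs x
  have := (mem p).1 (by simp); have := (mem q).1 (by simp); have := (mem r).1 (by simp)
  have := (mem i).2 (by simp); have := (mem k).2 (by simp)
  omega

lemma conTriple_comm₁₂ {a b c : Atoms I} : ConTriple I a b c ↔ ConTriple I b a c := by
  rcases a with a | _ <;> rcases b with b | _ <;> rcases c with c | _ <;>
    simp only [ConTriple] <;> try exact eq_comm
  rw [Finset.inter_comm a.val.2.2.val, evenly_comm₁₂]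
  grind

lemma conTriple_comm₂₃ {a b c : Atoms I} : ConTriple I a b c ↔ ConTriple I a c b := by
  rcases a with a | _ <;> rcases b with b | _ <;> rcases c with c | _ <;>
    simp only [ConTriple] <;> try exact eq_comm
  rw [Finset.inter_assoc, Finset.inter_comm b.val.2.2.val, ← Finset.inter_assoc,
    evenly_comm₂₃]
  grind

end Basic

inductive Ult (I : Type)
  | ident
  | atom (a : Hset I)
  | blur (W : TwoSet I)

namespace Ult
variable {I : Type}

instance : Membership (Set (Atoms I)) (Ult I) where
  mem
    | ident, X => (Sum.inr () : Atoms I) ∈ X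
    | atom a, X => (Sum.inl a : Atoms I) ∈ X
    | blur W, X => (Eset I W \ X).Finite

@[simp] lemma mem_blur {X : Set (Atoms I)} {W : TwoSet I} :
    X ∈ blur W ↔ (Eset I W \ X).Finite := Iff.rfl

def ofAtom : Atoms I → Ult I
  | .inl a => atom a
  | .inr _ => ident

@[simp] lemma mem_ofAtom {X : Set (Atoms I)} {a : Atoms I} : X ∈ ofAtom a ↔ a ∈ X := by
  rcases a with a | _ <;> rfl

def atomBlock : Ult I → Finset I
  | atom a => a.val.2.2.val
  | _ => ∅

lemma atomBlock_card_le (u : Ult I) : u.atomBlock.card ≤ 2 := by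
  rcases u with _ | a | _
  exacts [Nat.zero_le _, a.val.2.2.prop.le, Nat.zero_le _]

variable [DecidableEq I]

/-- The consistent triangles of the ultrafilter extension of the atom structure. -/
def Con : Ult I → Ult I → Ult I → Prop
  | ident, v, w => v = w
  | u, ident, w => u = w
  | u, v, ident => u = v
  | atom a, atom b, atom c => ConTriple I (.inl a) (.inl b) (.inl c)
  | atom a, atom b, blur V => a.val.2.2.val ∩ b.val.2.2.val ∩ V.val = ∅
  | atom a, blur Z, atom c => a.val.2.2.val ∩ Z.val ∩ c.val.2.2.val = ∅
  | blur S, atom b, atom c => S.val ∩ b.val.2.2.val ∩ c.val.2.2.val = ∅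
  | _, _, _ => True

lemma con_comm₁₂ {u v w : Ult I} : Con u v w ↔ Con v u w := by
  rcases u with _ | a | S <;> rcases v with _ | b | Z <;> rcases w with _ | c | V <;>
    simp only [Con]
  all_goals first
    | exact conTriple_comm₁₂
    | exact eq_comm
    | simp only [Finset.inter_comm, Finset.inter_left_comm]

lemma con_comm₂₃ {u v w : Ult I} : Con u v w ↔ Con u w v := by
  rcases u with _ | a | S <;> rcases v with _ | b | Z <;> rcases w with _ | c | V <;>
    simp only [Con]
  all_goals first
    | exact conTriple_comm₂₃
    | exact eq_comm
    | simp only [Finset.inter_comm, Finset.inter_left_comm]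

@[simp] lemma con_ident_left {v w : Ult I} : Con ident v w ↔ v = w := Iff.rfl

@[simp] lemma con_ident_mid {u w : Ult I} : Con u ident w ↔ u = w := by
  rcases u with _ | a | S <;> simp [Con]

@[simp] lemma con_ident_right {u v : Ult I} : Con u v ident ↔ u = v := by
  rcases u with _ | a | S <;> rcases v with _ | b | Z <;> simp [Con, eq_comm]

lemma con_ofAtom {a b c : Atoms I} :
    Con (ofAtom a) (ofAtom b) (ofAtom c) ↔ ConTriple I a b c := by
  rcases a with a | _ <;> rcases b with b | _ <;> rcases c with c | _ <;>
    simp only [ofAtom, Con, ConTriple, Ult.atom.injEq, reduceCtorEq, true_iff]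
  all_goals first | rfl | exact Sum.inl_injective.eq_iff.symm

end Ult

section Blocks
variable {I : Type}

@[simp] lemma inl_mem_Eset {a : Hset I} {W : TwoSet I} :
    (Sum.inl a : Atoms I) ∈ Eset I W ↔ a.val.2.2 = W :=
  ⟨fun ⟨_, hx, hW⟩ => Sum.inl_injective hx ▸ hW, fun hW => ⟨a, rfl, hW⟩⟩

@[simp] lemma inr_not_mem_Eset {W : TwoSet I} : (Sum.inr () : Atoms I) ∉ Eset I W :=
  fun ⟨_, hx, _⟩ => Sum.inr_ne_inl hx

lemma TwoSet.exists_mem_ne (W : TwoSet I) (R : I) : ∃ Q ∈ W.val, Q ≠ R := by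
  obtain ⟨a, ha, b, hb, hab⟩ := Finset.one_lt_card.mp (W.prop ▸ one_lt_two)
  by_cases h : a = R
  · exact ⟨b, hb, fun hbR => hab (h.trans hbR.symm)⟩
  · exact ⟨a, ha, h⟩

lemma TwoSet.nonempty (W : TwoSet I) : W.val.Nonempty :=
  Finset.card_pos.mp (by rw [W.prop]; exact two_pos)

lemma Eset_infinite (W : TwoSet I) : (Eset I W).Infinite := by
  obtain ⟨P, hP⟩ := W.nonempty
  refine Set.infinite_of_injective_forall_mem
    (f := fun k : ℕ => (Sum.inl ⟨(k, P, W), hP⟩ : Atoms I)) (fun k l h => ?_)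
    fun k => ⟨_, rfl, rfl⟩
  simpa using congrArg (fun a : Hset I => a.val.1) (Sum.inl_injective h)

variable [Fintype I]

instance : Finite (TwoSet I) := by unfold TwoSet; infer_instance

lemma finite_setOf_index_le (K : ℕ) : {a : Hset I | a.val.1 ≤ K}.Finite :=
  (((Set.finite_Iic K).prod (Set.univ : Set (I × TwoSet I)).toFinite).preimage
    Subtype.val_injective.injOn).subset fun _ ha => ⟨ha, Set.mem_univ _⟩

lemma diff_Eset_finite_iff {W : TwoSet I} {X : Set (Atoms I)} :
    (Eset I W \ X).Finite ↔
      ∃ N, ∀ a : Hset I, a.val.2.2 = W → N < a.val.1 → (Sum.inl a : Atoms I) ∈ X := by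
  constructor
  · intro h
    obtain ⟨N, hN⟩ := ((h.preimage Sum.inl_injective.injOn).image fun a => a.val.1).bddAbove
    refine ⟨N, fun a ha hN' => by_contra fun haX => ?_⟩
    exact hN'.not_ge (hN ⟨a, ⟨inl_mem_Eset.mpr ha, haX⟩, rfl⟩)
  · rintro ⟨N, hN⟩
    refine ((finite_setOf_index_le N).image Sum.inl).subset ?_
    rintro _ ⟨⟨a, rfl, ha⟩, haX⟩
    exact ⟨a, not_lt.mp fun h => haX (hN a ha h), rfl⟩

end Blocks

section TermAlgebra
variable {I : Type} {X Y : Set (Atoms I)}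

lemma univ_mem_termAlg : Set.univ ∈ TermAlg I := fun _ => Or.inr (by simp)

lemma singleton_inr_mem_termAlg : {(Sum.inr () : Atoms I)} ∈ TermAlg I := fun _ =>
  Or.inl ((Set.finite_singleton _).subset Set.inter_subset_left)

lemma union_mem_termAlg (hX : X ∈ TermAlg I) (hY : Y ∈ TermAlg I) : X ∪ Y ∈ TermAlg I := by
  intro W
  rcases hX W with hX' | hX'
  · rcases hY W with hY' | hY'
    · exact Or.inl (by rw [Set.union_inter_distrib_right]; exact hX'.union hY')
    · exact Or.inr (hY'.subset (Set.sdiff_subset_sdiff_right Set.subset_union_right))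
  · exact Or.inr (hX'.subset (Set.sdiff_subset_sdiff_right Set.subset_union_left))

lemma compl_mem_termAlg (hX : X ∈ TermAlg I) : Xᶜ ∈ TermAlg I := fun W =>
  (hX W).symm.imp (fun h => by rwa [Set.inter_comm, ← Set.sdiff_eq])
    (fun h => by rwa [Set.sdiff_compl, Set.inter_comm])

lemma mem_blur_iff_infinite (hX : X ∈ TermAlg I) {W : TwoSet I} :
    X ∈ Ult.blur W ↔ (X ∩ Eset I W).Infinite := by
  refine ⟨fun h h' => Eset_infinite W ((h'.union h).subset fun a ha => ?_),
    fun h => (hX W).resolve_left h⟩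
  by_cases haX : a ∈ X
  exacts [Or.inl ⟨haX, ha⟩, Or.inr ⟨ha, haX⟩]

namespace Ult

lemma univ_mem (u : Ult I) : Set.univ ∈ u := by
  rcases u
  exacts [trivial, trivial, by simp]

lemma empty_not_mem (u : Ult I) : ∅ ∉ u := by
  rcases u with _ | _ | W
  exacts [id, id, by simpa using Eset_infinite W]

lemma mem_of_subset {u : Ult I} (h : X ∈ u) (hXY : X ⊆ Y) : Y ∈ u := by
  rcases u with _ | _ | W
  exacts [hXY h, hXY h, h.subset (Set.sdiff_subset_sdiff_right hXY)]

lemma union_mem_iff (hX : X ∈ TermAlg I) (hY : Y ∈ TermAlg I) {u : Ult I} :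
    X ∪ Y ∈ u ↔ X ∈ u ∨ Y ∈ u := by
  rcases u with _ | _ | W
  · exact Set.mem_union _ _ _
  · exact Set.mem_union _ _ _
  · rw [mem_blur_iff_infinite hX, mem_blur_iff_infinite hY,
      mem_blur_iff_infinite (union_mem_termAlg hX hY), Set.union_inter_distrib_right,
      Set.infinite_union]

lemma compl_mem_iff (hX : X ∈ TermAlg I) {u : Ult I} : Xᶜ ∈ u ↔ X ∉ u := by
  rcases u with _ | _ | W
  · exact Iff.rfl
  · exact Iff.rfl
  · rw [mem_blur_iff_infinite (compl_mem_termAlg hX), Set.inter_comm, ← Set.sdiff_eq]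
    exact Iff.rfl

lemma singleton_inr_mem_iff {u : Ult I} : {(Sum.inr () : Atoms I)} ∈ u ↔ u = ident := by
  rcases u with _ | _ | W
  · exact iff_of_true rfl rfl
  · exact iff_of_false Sum.inl_ne_inr (by simp)
  · exact iff_of_false (fun h => Eset_infinite W (h.of_sdiff (Set.finite_singleton _))) (by simp)

lemma inter_mem {u : Ult I} (hX : X ∈ u) (hY : Y ∈ u) : X ∩ Y ∈ u := by
  rcases u with _ | _ | W
  exacts [⟨hX, hY⟩, ⟨hX, hY⟩, by rw [mem_blur, Set.sdiff_inter]; exact hX.union hY]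

lemma nonempty_of_mem {u : Ult I} (hX : X ∈ u) : X.Nonempty :=
  Set.nonempty_iff_ne_empty.mpr fun h => u.empty_not_mem (h ▸ hX)

variable [Fintype I]

lemma exists_inl_mem_of_mem_blur {W : TwoSet I} (h : X ∈ blur W) (K : ℕ) :
    ∃ a : Hset I, a.val.2.2 = W ∧ K < a.val.1 ∧ (Sum.inl a : Atoms I) ∈ X := by
  obtain ⟨N, hN⟩ := diff_Eset_finite_iff.mp h
  obtain ⟨P, hP⟩ := W.nonempty
  exact ⟨⟨(K + N + 1, P, W), hP⟩, rfl, by simp only; omega, hN _ rfl (by simp only; omega)⟩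

end Ult

variable [Fintype I]

lemma finite_inl_mem_of_forall_not_mem_blur (hX : X ∈ TermAlg I) (h : ∀ W, X ∉ Ult.blur W) :
    {a : Hset I | (Sum.inl a : Atoms I) ∈ X}.Finite :=
  (Set.finite_iUnion fun W => (((hX W).resolve_right (h W)).preimage
    Sum.inl_injective.injOn)).subset fun a ha =>
      Set.mem_iUnion.mpr ⟨a.val.2.2, ha, inl_mem_Eset.mpr rfl⟩

end TermAlgebra

section Composition
variable {I : Type} [DecidableEq I] {X Y : Set (Atoms I)}

lemma cmComp_comm : cmComp I X Y = cmComp I Y X := by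
  ext c
  exact ⟨fun ⟨a, ha, b, hb, h⟩ => ⟨b, hb, a, ha, conTriple_comm₁₂.mp h⟩,
    fun ⟨a, ha, b, hb, h⟩ => ⟨b, hb, a, ha, conTriple_comm₁₂.mp h⟩⟩

lemma subset_cmComp_of_inr_mem_left (h : (Sum.inr () : Atoms I) ∈ X) : Y ⊆ cmComp I X Y :=
  fun c hc => ⟨_, h, c, hc, rfl⟩

lemma subset_cmComp_of_inr_mem_right (h : (Sum.inr () : Atoms I) ∈ Y) : X ⊆ cmComp I X Y :=
  cmComp_comm (I := I) ▸ subset_cmComp_of_inr_mem_left h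

lemma conTriple_self_inr (c : Atoms I) : ConTriple I c c (Sum.inr ()) := by
  rcases c with c | _ <;> rfl

lemma cmComp_inter_Eset_subset (V : TwoSet I) :
    cmComp I X Y ∩ Eset I V ⊆
      (⋃ (_ : (Sum.inr () : Atoms I) ∈ Y), X ∩ Eset I V) ∪
      (⋃ (_ : (Sum.inr () : Atoms I) ∈ X), Y ∩ Eset I V) ∪
      Sum.inl '' ⋃ p ∈ {a : Hset I | (Sum.inl a : Atoms I) ∈ X} ×ˢ
          {b : Hset I | (Sum.inl b : Atoms I) ∈ Y},
        {c : Hset I | c.val.2.2 = V ∧ ConTriple I (Sum.inl p.1) (Sum.inl p.2) (Sum.inl c)} := by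
  rintro _ ⟨⟨a, ha, b, hb, hab⟩, c, rfl, hcV⟩
  rcases a with a | ⟨⟩
  · rcases b with b | ⟨⟩
    · exact Or.inr ⟨c, Set.mem_biUnion (x := (a, b)) ⟨ha, hb⟩ ⟨hcV, hab⟩, rfl⟩
    · have hac : Sum.inl a = Sum.inl c := hab
      exact Or.inl (Or.inl (Set.mem_iUnion.mpr ⟨hb, hac ▸ ha, c, rfl, hcV⟩))
  · have hbc : b = Sum.inl c := hab
    exact Or.inl (Or.inr (Set.mem_iUnion.mpr ⟨ha, hbc ▸ hb, c, rfl, hcV⟩))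

namespace Ult

lemma inr_mem_cmComp {u : Ult I} (hX : X ∈ u) (hY : Y ∈ u) :
    (Sum.inr () : Atoms I) ∈ cmComp I X Y := by
  obtain ⟨c, hcX, hcY⟩ := nonempty_of_mem (inter_mem hX hY)
  exact ⟨c, hcX, c, hcY, conTriple_self_inr c⟩

lemma exists_con_of_mem_cmComp {c : Atoms I} (h : c ∈ cmComp I X Y) :
    ∃ u v, Con u v (ofAtom c) ∧ X ∈ u ∧ Y ∈ v := by
  obtain ⟨a, ha, b, hb, hab⟩ := h
  exact ⟨ofAtom a, ofAtom b, con_ofAtom.mpr hab, mem_ofAtom.mpr ha, mem_ofAtom.mpr hb⟩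

variable [Fintype I]

lemma cmComp_mem_blur_of_atom_blur {a : Hset I} {Z : TwoSet I} (ha : (Sum.inl a : Atoms I) ∈ X)
    (hY : Y ∈ blur Z) (V : TwoSet I) : cmComp I X Y ∈ blur V := by
  obtain ⟨N, hN⟩ := diff_Eset_finite_iff.mp hY
  refine diff_Eset_finite_iff.mpr ⟨a.val.1 + N, fun c _ hc => ?_⟩
  obtain ⟨Q, hQ, hQc⟩ := Z.exists_mem_ne c.val.2.1
  refine ⟨_, ha, Sum.inl ⟨(2 * c.val.1 - a.val.1, Q, Z), hQ⟩, hN _ rfl (by simp only; omega),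
    Or.inr ⟨evenly_of_add_eq (by simp only; omega), fun h => hQc h.2⟩⟩

lemma inl_mem_cmComp_of_blur_blur {S Z : TwoSet I} (hX : X ∈ blur S) (hY : Y ∈ blur Z)
    (c : Hset I) : (Sum.inl c : Atoms I) ∈ cmComp I X Y := by
  obtain ⟨N, hN⟩ := diff_Eset_finite_iff.mp hY
  obtain ⟨a, -, ha, haX⟩ := exists_inl_mem_of_mem_blur hX (c.val.1 + N)
  obtain ⟨Q, hQ, hQc⟩ := Z.exists_mem_ne c.val.2.1
  have he : evenly c.val.1 (2 * a.val.1 - c.val.1) a.val.1 := evenly_of_add_eq (by omega)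
  refine ⟨_, haX, Sum.inl ⟨(2 * a.val.1 - c.val.1, Q, Z), hQ⟩, hN _ rfl (by simp only; omega),
    Or.inr ⟨?_, fun h => hQc h.2⟩⟩
  simpa only [evenly_comm₁₂, evenly_comm₂₃] using he

theorem cmComp_mem_of_con {u v w : Ult I} (h : Con u v w) (hu : X ∈ u) (hv : Y ∈ v) :
    cmComp I X Y ∈ w := by
  match u, v, w with
  | ident, _, _ =>
    rw [← con_ident_left.mp h]; exact mem_of_subset hv (subset_cmComp_of_inr_mem_left hu)
  | _, ident, _ =>
    rw [← con_ident_mid.mp h]; exact mem_of_subset hu (subset_cmComp_of_inr_mem_right hv)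
  | _, _, ident => obtain rfl := con_ident_right.mp h; exact inr_mem_cmComp hu hv
  | atom _, atom _, atom _ => exact ⟨_, hu, _, hv, h⟩
  | atom _, atom _, blur V =>
    refine Set.finite_empty.subset fun _ ⟨⟨c, hc, hcV⟩, hn⟩ => hn ?_
    subst hc
    exact ⟨_, hu, _, hv, Or.inl (hcV ▸ h)⟩
  | atom _, blur _, atom _ =>
    obtain ⟨b, hbZ, -, hb⟩ := exists_inl_mem_of_mem_blur hv 0
    exact ⟨_, hu, _, hb, Or.inl (hbZ ▸ h)⟩
  | blur _, atom _, atom _ =>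
    obtain ⟨a, haS, -, ha⟩ := exists_inl_mem_of_mem_blur hu 0
    exact ⟨_, ha, _, hv, Or.inl (haS ▸ h)⟩
  | atom _, blur _, blur V => exact cmComp_mem_blur_of_atom_blur hu hv V
  | blur _, atom _, blur V => rw [cmComp_comm]; exact cmComp_mem_blur_of_atom_blur hv hu V
  | blur _, blur _, atom c => exact inl_mem_cmComp_of_blur_blur hu hv c
  | blur _, blur _, blur V =>
    obtain ⟨a, -, -, ha⟩ := exists_inl_mem_of_mem_blur hu 0
    exact cmComp_mem_blur_of_atom_blur ha hv V

end Ult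

variable [Fintype I]

lemma finite_setOf_conTriple {a b : Hset I} {V : TwoSet I}
    (h : ¬ Ult.Con (.atom a) (.atom b) (.blur V)) :
    {c : Hset I | c.val.2.2 = V ∧ ConTriple I (Sum.inl a) (Sum.inl b) (Sum.inl c)}.Finite := by
  refine (finite_setOf_index_le (2 * (a.val.1 + b.val.1))).subset ?_
  rintro c ⟨rfl, hc | ⟨he, -⟩⟩
  exacts [absurd hc h, he.le_two_mul_add]

theorem cmComp_inter_Eset_finite_or_exists_con (hX : X ∈ TermAlg I) (hY : Y ∈ TermAlg I)
    (V : TwoSet I) :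
    (cmComp I X Y ∩ Eset I V).Finite ∨
      ∃ u v, Ult.Con u v (.blur V) ∧ X ∈ u ∧ Y ∈ v := by
  refine or_iff_not_imp_right.mpr fun hno => ?_
  simp only [not_exists, not_and] at hno
  have hXV (h : (Sum.inr () : Atoms I) ∈ Y) : (X ∩ Eset I V).Finite :=
    (hX V).resolve_right fun hXV => hno _ .ident (Ult.con_ident_mid.mpr rfl) hXV h
  have hYV (h : (Sum.inr () : Atoms I) ∈ X) : (Y ∩ Eset I V).Finite :=
    (hY V).resolve_right (hno .ident _ rfl h)
  have hpairs : ({a : Hset I | (Sum.inl a : Atoms I) ∈ X} ×ˢ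
      {b : Hset I | (Sum.inl b : Atoms I) ∈ Y}).Finite := by
    refine Set.finite_prod.mpr ⟨or_iff_not_imp_right.mpr fun hb => ?_,
      or_iff_not_imp_right.mpr fun ha => ?_⟩
    · obtain ⟨b, hb⟩ := Set.nonempty_iff_ne_empty.mpr hb
      exact finite_inl_mem_of_forall_not_mem_blur hX fun S hS =>
        hno (.blur S) (.atom b) trivial hS hb
    · obtain ⟨a, ha⟩ := Set.nonempty_iff_ne_empty.mpr ha
      exact finite_inl_mem_of_forall_not_mem_blur hY fun Z hZ =>
        hno (.atom a) (.blur Z) trivial ha hZ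
  exact (((Set.finite_iUnion hXV).union (Set.finite_iUnion hYV)).union
    ((hpairs.biUnion fun p hp => finite_setOf_conTriple fun h => hno _ _ h hp.1 hp.2).image
      Sum.inl)).subset (cmComp_inter_Eset_subset V)

theorem cmComp_mem_termAlg (hX : X ∈ TermAlg I) (hY : Y ∈ TermAlg I) :
    cmComp I X Y ∈ TermAlg I := fun V =>
  (cmComp_inter_Eset_finite_or_exists_con hX hY V).imp_right
    fun ⟨_, _, h, hu, hv⟩ => Ult.cmComp_mem_of_con h hu hv

theorem Ult.cmComp_mem_iff (hX : X ∈ TermAlg I) (hY : Y ∈ TermAlg I) {w : Ult I} :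
    cmComp I X Y ∈ w ↔ ∃ u v, Con u v w ∧ X ∈ u ∧ Y ∈ v := by
  refine ⟨fun h => ?_, fun ⟨u, v, huvw, hu, hv⟩ => cmComp_mem_of_con huvw hu hv⟩
  rcases w with _ | c | V
  · exact exists_con_of_mem_cmComp (c := Sum.inr ()) h
  · exact exists_con_of_mem_cmComp (c := Sum.inl c) h
  · exact (cmComp_inter_Eset_finite_or_exists_con hX hY V).resolve_left
      ((mem_blur_iff_infinite (cmComp_mem_termAlg hX hY)).mp h)

end Composition

structure IsSaturatedNetwork {I : Type} [DecidableEq I] (N : ℕ → ℕ → Ult I) : Prop where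
  eq_ident_iff : ∀ x y, N x y = .ident ↔ x = y
  symm : ∀ x y, N x y = N y x
  con : ∀ x y z, Ult.Con (N x y) (N y z) (N x z)
  saturated : ∀ x z u v, Ult.Con u v (N x z) → ∃ y, N x y = u ∧ N y z = v

namespace IsSaturatedNetwork
variable {I : Type} [DecidableEq I] {N : ℕ → ℕ → Ult I} {X Y : Set (Atoms I)}

lemma eq_of_forall_mem_iff (hN : IsSaturatedNetwork N) (h : ∀ x y, X ∈ N x y ↔ Y ∈ N x y) :
    X = Y := by
  ext a
  obtain ⟨y, hy, -⟩ := hN.saturated 0 0 (.ofAtom a) (.ofAtom a)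
    (by rw [(hN.eq_ident_iff 0 0).mpr rfl]; exact Ult.con_ident_right.mpr rfl)
  simpa [hy] using h 0 y

lemma cmComp_mem_iff [Fintype I] (hN : IsSaturatedNetwork N) (hX : X ∈ TermAlg I)
    (hY : Y ∈ TermAlg I) (x z : ℕ) :
    cmComp I X Y ∈ N x z ↔ ∃ y, X ∈ N x y ∧ Y ∈ N y z := by
  rw [Ult.cmComp_mem_iff hX hY]
  constructor
  · rintro ⟨u, v, h, hu, hv⟩
    obtain ⟨y, rfl, rfl⟩ := hN.saturated x z u v h
    exact ⟨y, hu, hv⟩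
  · rintro ⟨y, hu, hv⟩
    exact ⟨_, _, hN.con x y z, hu, hv⟩

end IsSaturatedNetwork

lemma exists_seq_frequently_eq {α : Type*} [Countable α] [Nonempty α] :
    ∃ f : ℕ → α, ∀ a N, ∃ n, N < n ∧ f n = a := by
  obtain ⟨g, hg⟩ := exists_surjective_nat α
  refine ⟨fun n => g n.unpair.2, fun a N => ?_⟩
  obtain ⟨m, rfl⟩ := hg a
  exact ⟨Nat.pair (N + 1) m, (Nat.left_le_pair (N + 1) m).trans_lt' (Nat.lt_succ_self N),
    by simp only [Nat.unpair_pair]⟩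

/-- Ask for a new vertex `y` with `N x y = u` and `N y z = v`; the other edges at `y` get
the blur `W`. -/
structure Request (I : Type) where
  x : ℕ
  z : ℕ
  u : Ult I
  v : Ult I
  W : TwoSet I

section Construction
variable {I : Type}

instance [Fintype I] : Countable (Ult I) := by
  have : Countable (Hset I) := by unfold Hset TwoSet; infer_instance
  refine Function.Surjective.countable
    (f := fun o : Option (Hset I ⊕ TwoSet I) => o.elim .ident (Sum.elim .atom .blur)) ?_
  rintro (_ | a | W)
  exacts [⟨none, rfl⟩, ⟨some (.inl a), rfl⟩, ⟨some (.inr W), rfl⟩]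

instance [Fintype I] : Countable (Request I) :=
  Function.Surjective.countable (f := fun p : ℕ × ℕ × Ult I × Ult I × TwoSet I =>
    ⟨p.1, p.2.1, p.2.2.1, p.2.2.2.1, p.2.2.2.2⟩) fun r => ⟨(r.x, r.z, r.u, r.v, r.W), rfl⟩

namespace Request

def label (r : Request I) (s : ℕ) : Ult I :=
  if s = r.x then r.u else if s = r.z then r.v else .blur r.W

variable {r : Request I}

lemma label_x : r.label r.x = r.u := if_pos rfl

lemma label_z (h : r.z ≠ r.x) : r.label r.z = r.v := by
  rw [label, if_neg h, if_pos rfl]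

lemma label_of_ne {s : ℕ} (hx : s ≠ r.x) (hz : s ≠ r.z) : r.label s = .blur r.W := by
  rw [label, if_neg hx, if_neg hz]

variable [DecidableEq I]

/-- Serving `r` keeps all triangles consistent when `w` is the label of the edge `{x, z}`. -/
def Admissible (r : Request I) (w : Ult I) : Prop :=
  r.u ≠ .ident ∧ r.v ≠ .ident ∧ Disjoint r.W.val (r.u.atomBlock ∪ r.v.atomBlock) ∧
    Ult.Con r.u r.v w

variable {w : Ult I}

lemma Admissible.label_ne_ident (hr : r.Admissible w) (s : ℕ) : r.label s ≠ .ident := by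
  unfold label; split_ifs
  exacts [hr.1, hr.2.1, nofun]

lemma Admissible.disjoint_label (hr : r.Admissible w) (s : ℕ) :
    Disjoint r.W.val (r.label s).atomBlock := by
  unfold label; split_ifs
  exacts [hr.2.2.1.mono_right Finset.subset_union_left,
    hr.2.2.1.mono_right Finset.subset_union_right, Finset.disjoint_empty_right _]

end Request

variable [DecidableEq I]

lemma Ult.con_blur_of_disjoint {a b : Ult I} {W : TwoSet I} (ha : a ≠ .ident) (hb : b ≠ .ident)
    (h : Disjoint W.val b.atomBlock) : Con a b (.blur W) := by
  rcases a with _ | a | S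
  · exact absurd rfl ha
  all_goals rcases b with _ | b | Z
  all_goals first | exact absurd rfl hb | trivial | skip
  exact Finset.eq_empty_of_forall_notMem fun i hi =>
    Finset.disjoint_left.mp h (Finset.mem_inter.mp hi).2
      (Finset.mem_inter.mp (Finset.mem_inter.mp hi).1).2

open Classical in
/-- The label of the edge `{s, t}` for `s < t`: vertex `t` serves the request `f t` if it can. -/
noncomputable def edgeLabel (f : ℕ → Request I) (t s : ℕ) : Ult I :=
  if _ : max (f t).x (f t).z < t then
    if (f t).Admissible (if (f t).x = (f t).z then .ident
        else edgeLabel f (max (f t).x (f t).z) (min (f t).x (f t).z))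
    then (f t).label s else .blur (f t).W
  else .blur (f t).W
termination_by t
decreasing_by assumption

noncomputable def network (f : ℕ → Request I) (x y : ℕ) : Ult I :=
  if x = y then .ident else edgeLabel f (max x y) (min x y)

def IsServed (f : ℕ → Request I) (t : ℕ) : Prop :=
  max (f t).x (f t).z < t ∧ (f t).Admissible (network f (f t).x (f t).z)

variable {f : ℕ → Request I} {s t x y z : ℕ}

lemma edgeLabel_of_isServed (h : IsServed f t) : edgeLabel f t s = (f t).label s := by
  rw [edgeLabel, dif_pos h.1]
  exact if_pos h.2

lemma edgeLabel_of_not_isServed (h : ¬ IsServed f t) : edgeLabel f t s = .blur (f t).W := by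
  rw [edgeLabel]
  by_cases h₁ : max (f t).x (f t).z < t
  · rw [dif_pos h₁]
    exact if_neg fun h₂ => h ⟨h₁, h₂⟩
  · rw [dif_neg h₁]

lemma network_self (x : ℕ) : network f x x = .ident := if_pos rfl

lemma network_comm (x y : ℕ) : network f x y = network f y x := by
  rw [network, network, max_comm, min_comm]; simp only [eq_comm]

lemma network_of_lt (h : s < t) : network f s t = edgeLabel f t s := by
  rw [network, if_neg h.ne, max_eq_right h.le, min_eq_left h.le]

lemma network_ne_ident (h : x ≠ y) : network f x y ≠ .ident := by
  rw [network, if_neg h]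
  by_cases hs : IsServed f (max x y)
  · rw [edgeLabel_of_isServed hs]; exact hs.2.label_ne_ident _
  · rw [edgeLabel_of_not_isServed hs]; exact nofun

open Ult in
lemma con_network_of_lt {s' : ℕ} (hs : s < t) (hs' : s' < t) (hss' : s ≠ s') :
    Con (network f s s') (network f s' t) (network f s t) := by
  have he := network_ne_ident (f := f) hss'
  rw [network_of_lt hs, network_of_lt hs']
  by_cases hserved : IsServed f t
  swap
  · rw [edgeLabel_of_not_isServed hserved, edgeLabel_of_not_isServed hserved]
    exact con_blur_of_disjoint he nofun (Finset.disjoint_empty_right _)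
  have hr := hserved.2
  rw [edgeLabel_of_isServed hserved, edgeLabel_of_isServed hserved]
  by_cases hxz : s = (f t).x ∧ s' = (f t).z
  · obtain ⟨rfl, rfl⟩ := hxz
    rw [Request.label_x, Request.label_z (Ne.symm hss')]
    exact con_comm₁₂.mp (con_comm₂₃.mp (con_comm₁₂.mp hr.2.2.2))
  by_cases hzx : s = (f t).z ∧ s' = (f t).x
  · obtain ⟨rfl, rfl⟩ := hzx
    rw [Request.label_x, Request.label_z hss', network_comm]
    exact con_comm₁₂.mp (con_comm₂₃.mp hr.2.2.2)
  by_cases hs'r : s' = (f t).x ∨ s' = (f t).z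
  · rw [Request.label_of_ne (s := s) (by omega) (by omega)]
    exact con_blur_of_disjoint he (hr.label_ne_ident s') (hr.disjoint_label s')
  · rw [Request.label_of_ne (s := s') (by omega) (by omega)]
    exact con_comm₂₃.mp (con_blur_of_disjoint he (hr.label_ne_ident s) (hr.disjoint_label s))

open Ult in
lemma con_network (x y z : ℕ) : Con (network f x y) (network f y z) (network f x z) := by
  rcases eq_or_ne x y with rfl | hxy
  · rw [network_self]; exact con_ident_left.mpr rfl
  rcases eq_or_ne y z with rfl | hyz
  · rw [network_self]; exact con_ident_mid.mpr rfl
  rcases eq_or_ne x z with rfl | hxz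
  · rw [network_self, network_comm y]; exact con_ident_right.mpr rfl
  obtain h | h | h : (x < z ∧ y < z) ∨ (x < y ∧ z < y) ∨ (y < x ∧ z < x) := by omega
  · exact con_network_of_lt h.1 h.2 hxy
  · have := con_network_of_lt (f := f) h.1 h.2 hxz
    rw [network_comm z] at this
    exact con_comm₁₂.mp (con_comm₂₃.mp (con_comm₁₂.mp this))
  · have := con_network_of_lt (f := f) h.1 h.2 hyz
    rw [network_comm z x, network_comm y x] at this
    exact con_comm₁₂.mp (con_comm₂₃.mp this)

variable [Fintype I]

lemma exists_twoSet_disjoint (s : Finset I) (h : s.card + 2 ≤ Fintype.card I) :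
    ∃ W : TwoSet I, Disjoint W.val s := by
  obtain ⟨t, hts, htc⟩ :=
    Finset.exists_subset_card_eq (s := sᶜ) (n := 2) (by rw [Finset.card_compl]; omega)
  exact ⟨⟨t, htc⟩, Finset.disjoint_of_subset_left hts disjoint_compl_left⟩

open Ult in
lemma network_saturated (hI : 6 ≤ Fintype.card I) (hf : ∀ r N, ∃ n, N < n ∧ f n = r)
    {u v : Ult I} (h : Con u v (network f x z)) :
    ∃ y, network f x y = u ∧ network f y z = v := by
  rcases eq_or_ne u .ident with rfl | hu
  · exact ⟨x, network_self x, (con_ident_left.mp h).symm⟩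
  rcases eq_or_ne v .ident with rfl | hv
  · exact ⟨z, (con_ident_mid.mp h).symm, network_self z⟩
  obtain ⟨W, hW⟩ := exists_twoSet_disjoint (u.atomBlock ∪ v.atomBlock) (by
    have := Finset.card_union_le u.atomBlock v.atomBlock
    have := u.atomBlock_card_le; have := v.atomBlock_card_le
    omega)
  obtain ⟨n, hn, hfn⟩ := hf ⟨x, z, u, v, W⟩ (max x z)
  have hserved : IsServed f n := by rw [IsServed, hfn]; exact ⟨hn, hu, hv, hW, h⟩
  refine ⟨n, ?_, ?_⟩
  · rw [network_of_lt (lt_of_le_of_lt (le_max_left x z) hn), edgeLabel_of_isServed hserved, hfn]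
    exact Request.label_x
  · rw [network_comm, network_of_lt (lt_of_le_of_lt (le_max_right x z) hn),
      edgeLabel_of_isServed hserved, hfn]
    rcases eq_or_ne z x with rfl | hzx
    · rw [network_self] at h
      exact (con_ident_right.mp h) ▸ Request.label_x
    · exact Request.label_z hzx

theorem exists_isSaturatedNetwork (hI : 6 ≤ Fintype.card I) :
    ∃ N : ℕ → ℕ → Ult I, IsSaturatedNetwork N := by
  obtain ⟨W, -⟩ := exists_twoSet_disjoint (∅ : Finset I) (by rw [Finset.card_empty]; omega)
  have : Nonempty (Request I) := ⟨⟨0, 0, .ident, .ident, W⟩⟩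
  obtain ⟨f, hf⟩ := exists_seq_frequently_eq (α := Request I)
  exact ⟨network f, ⟨fun x y => ⟨fun h => by_contra fun hxy => network_ne_ident hxy h,
    fun h => h ▸ network_self x⟩,
    network_comm, con_network, fun _ _ _ _ => network_saturated hI hf⟩⟩

end Construction

/-- the term algebra over the blown-up-and-blurred atom structure is closed
under the operations of `Cm F`, contains the unit and the identity, and the resulting
relation-type algebra is representable. -/
theorem termAlg_closed_and_representable (I : Type) [Fintype I] [DecidableEq I]
    (hI : 6 ≤ Fintype.card I) :
    (Set.univ ∈ TermAlg I) ∧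
    ({(Sum.inr () : Atoms I)} ∈ TermAlg I) ∧
    (∀ X ∈ TermAlg I, ∀ Y ∈ TermAlg I, X ∪ Y ∈ TermAlg I) ∧
    (∀ X ∈ TermAlg I, Xᶜ ∈ TermAlg I) ∧
    (∀ X ∈ TermAlg I, ∀ Y ∈ TermAlg I, cmComp I X Y ∈ TermAlg I) ∧
    (∀ X ∈ TermAlg I, (cmAlg I).conv X ∈ TermAlg I) ∧
    (∃ (B : Type) (E : B → B → Prop), Equivalence E ∧
      ∃ h : Set (Atoms I) → Set (B × B),
        (∀ X ∈ TermAlg I, ∀ Y ∈ TermAlg I, h X = h Y → X = Y) ∧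
        (∀ X ∈ TermAlg I, h X ⊆ {p : B × B | E p.1 p.2}) ∧
        h Set.univ = {p : B × B | E p.1 p.2} ∧
        h ∅ = ∅ ∧
        (∀ X ∈ TermAlg I, ∀ Y ∈ TermAlg I, h (X ∪ Y) = h X ∪ h Y) ∧
        (∀ X ∈ TermAlg I, h Xᶜ = {p : B × B | E p.1 p.2} \ h X) ∧
        (∀ X ∈ TermAlg I, ∀ Y ∈ TermAlg I, h (cmComp I X Y) =
          {p : B × B | E p.1 p.2 ∧ ∃ y, (p.1, y) ∈ h X ∧ (y, p.2) ∈ h Y}) ∧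
        (∀ X ∈ TermAlg I, h ((cmAlg I).conv X) = {p : B × B | (p.2, p.1) ∈ h X}) ∧
        h {(Sum.inr () : Atoms I)} = {p : B × B | E p.1 p.2 ∧ p.1 = p.2}) := by
  refine ⟨univ_mem_termAlg, singleton_inr_mem_termAlg, fun X hX Y hY => union_mem_termAlg hX hY,
    fun X hX => compl_mem_termAlg hX, fun X hX Y hY => cmComp_mem_termAlg hX hY,
    fun X hX => hX, ?_⟩
  obtain ⟨N, hN⟩ := exists_isSaturatedNetwork hI
  refine ⟨ℕ, fun _ _ => True, ⟨fun _ => trivial, fun _ => trivial, fun _ _ => trivial⟩,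
    fun X => {p | X ∈ N p.1 p.2}, fun X _ Y _ h => hN.eq_of_forall_mem_iff fun x y => ?_,
    fun _ _ _ _ => trivial, ?_, ?_, fun X hX Y hY => ?_, fun X hX => ?_, fun X hX Y hY => ?_,
    fun X _ => ?_, ?_⟩
  · exact Set.ext_iff.mp h (x, y)
  · ext p; exact iff_of_true (Ult.univ_mem _) trivial
  · ext p; exact iff_of_false (Ult.empty_not_mem _) id
  · ext p; exact Ult.union_mem_iff hX hY
  · ext p; exact (Ult.compl_mem_iff hX).trans (and_iff_right trivial).symm
  · ext p; exact (hN.cmComp_mem_iff hX hY p.1 p.2).trans (and_iff_right trivial).symm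
  · ext p; exact iff_of_eq (congrArg (X ∈ ·) (hN.symm p.1 p.2))
  · ext p
    exact Ult.singleton_inr_mem_iff.trans ((hN.eq_ident_iff _ _).trans (and_iff_right trivial).symm)
end

section
/- In every cylindric algebra of dimension 4, for every element x satisfying c_3 x = x, the inequality c_3(d_13 · c_1(d_01 · c_0(d_03 · x))) ≤ c_0(d_01 · c_1 x) · c_1(d_01 · c_0 x) holds. (The left-hand side is the substitution term τ_4(x) = {}_3 s(0,1) x = s^3_1 s^1_0 s^0_3 x, where s^i_j y := c_i(d_ij · y) for i ≠ j; the right-hand side is the relation-algebra-expressible term τ(x) = s^0_1 c_1 x · s^1_0 c_0 x.) -/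
/-- A cylindric algebra of dimension `ι` over a Boolean algebra. -/
structure CylindricAlgebra (ι : Type*) (A : Type*) [BooleanAlgebra A] where
  c : ι → A → A
  d : ι → ι → A
  c_bot : ∀ i, c i ⊥ = ⊥
  le_c : ∀ i x, x ≤ c i x
  c_inf_c : ∀ i x y, c i (x ⊓ c i y) = c i x ⊓ c i y
  c_comm : ∀ i j x, c i (c j x) = c j (c i x)
  d_diag : ∀ i, d i i = ⊤
  d_comp : ∀ i j k, k ≠ i → k ≠ j → d i j = c k (d i k ⊓ d k j)
  c_d_disj : ∀ i j x, i ≠ j → c i (d i j ⊓ x) ⊓ c i (d i j ⊓ xᶜ) = ⊥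

/-- in every 4-dimensional cylindric algebra, for every `x` with `c₃ x = x`,
`τ₄(x) = c₃(d₁₃ · c₁(d₀₁ · c₀(d₀₃ · x))) ≤ c₀(d₀₁ · c₁ x) · c₁(d₀₁ · c₀ x) = τ(x)`. -/
theorem tau4_le_tau {A : Type*} [BooleanAlgebra A] (C : CylindricAlgebra (Fin 4) A)
    (x : A) (hx : C.c 3 x = x) :
    C.c 3 (C.d 1 3 ⊓ C.c 1 (C.d 0 1 ⊓ C.c 0 (C.d 0 3 ⊓ x))) ≤
      C.c 0 (C.d 0 1 ⊓ C.c 1 x) ⊓ C.c 1 (C.d 0 1 ⊓ C.c 0 x) := by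
  have ctop : ∀ i, C.c i ⊤ = ⊤ := fun i => le_antisymm le_top (C.le_c i ⊤)
  have idem : ∀ i y, C.c i (C.c i y) = C.c i y := by
    intro i y
    have h := C.c_inf_c i ⊤ y
    rwa [top_inf_eq, ctop, top_inf_eq] at h
  have mono : ∀ i (y z : A), y ≤ z → C.c i y ≤ C.c i z := by
    intro i y z h
    have h1 : y ⊓ C.c i z = y := inf_eq_left.2 (h.trans (C.le_c i z))
    calc C.c i y = C.c i (y ⊓ C.c i z) := by rw [h1]
      _ = C.c i y ⊓ C.c i z := C.c_inf_c i y z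
      _ ≤ C.c i z := inf_le_right
  have pull : ∀ i (a b : A), C.c i b = b → C.c i (a ⊓ b) = C.c i a ⊓ b := by
    intro i a b h
    conv_lhs => rw [← h]
    rw [C.c_inf_c, h]
  -- closedness facts
  have hd01_3 : C.c 3 (C.d 0 1) = C.d 0 1 := by
    rw [C.d_comp 0 1 3 (by decide) (by decide), idem]
  have hd13_0 : C.c 0 (C.d 1 3) = C.d 1 3 := by
    rw [C.d_comp 1 3 0 (by decide) (by decide), idem]
  have hc1x_3 : C.c 3 (C.c 1 x) = C.c 1 x := by rw [C.c_comm, hx]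
  have hc0x_3 : C.c 3 (C.c 0 x) = C.c 0 x := by rw [C.c_comm, hx]
  set S := C.c 0 (C.d 0 1 ⊓ C.c 1 x) with hS
  set T := C.c 1 (C.d 0 1 ⊓ C.c 0 x) with hT
  set u := C.c 0 (C.d 0 3 ⊓ x) with hu
  set w := C.c 1 (C.d 0 1 ⊓ u) with hw
  have hS3 : C.c 3 S = S := by
    rw [hS, C.c_comm, pull 3 _ _ hc1x_3, hd01_3]
  have hS0 : C.c 0 S = S := idem _ _
  have hT3 : C.c 3 T = T := by
    rw [hT, C.c_comm, pull 3 _ _ hc0x_3, hd01_3]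
  -- Part A : w ≤ T
  have hA : w ≤ T :=
    mono 1 _ _ (inf_le_inf_left _ (mono 0 _ _ inf_le_right))
  -- Part B : d 1 3 ⊓ w ≤ S
  have e1 : C.c 1 ((C.d 0 1 ⊓ C.d 1 3) ⊓ C.c 1 x) = C.d 0 3 ⊓ C.c 1 x := by
    rw [C.c_inf_c, ← C.d_comp 0 3 1 (by decide) (by decide)]
  set R := C.c 1 (C.d 1 3 ⊓ S) with hR
  have hstep1 : C.d 0 3 ⊓ x ≤ R := by
    have h3 : (C.d 0 1 ⊓ C.d 1 3) ⊓ C.c 1 x ≤ C.d 1 3 ⊓ S := by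
      refine le_inf (le_trans inf_le_left inf_le_right) ?_
      have h4 : C.d 0 1 ⊓ C.c 1 x ≤ S := C.le_c 0 _
      exact le_trans (inf_le_inf_right _ inf_le_left) h4
    calc C.d 0 3 ⊓ x ≤ C.d 0 3 ⊓ C.c 1 x := inf_le_inf_left _ (C.le_c 1 x)
      _ = C.c 1 ((C.d 0 1 ⊓ C.d 1 3) ⊓ C.c 1 x) := e1.symm
      _ ≤ R := mono 1 _ _ h3
  have hR0 : C.c 0 R = R := by
    rw [hR, C.c_comm, pull 0 _ _ hS0, hd13_0]
  have hR1 : C.c 1 R = R := by rw [hR, idem]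
  have hstep2 : u ≤ R := by
    rw [hu, ← hR0]; exact mono 0 _ _ hstep1
  have hstep3 : w ≤ R := by
    have h5 : C.d 0 1 ⊓ u ≤ R := le_trans inf_le_right hstep2
    rw [hw, ← hR1]; exact mono 1 _ _ h5
  have hkey : C.d 1 3 ⊓ w ⊓ Sᶜ = ⊥ := by
    have hdisj := C.c_d_disj 1 3 (Sᶜ ⊓ w) (by decide)
    have hle1 : C.d 1 3 ⊓ w ⊓ Sᶜ ≤ C.c 1 (C.d 1 3 ⊓ (Sᶜ ⊓ w)) := by
      refine le_trans ?_ (C.le_c 1 _)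
      exact le_inf (le_trans inf_le_left inf_le_left)
        (le_inf inf_le_right (le_trans inf_le_left inf_le_right))
    have hle2 : C.d 1 3 ⊓ w ⊓ Sᶜ ≤ C.c 1 (C.d 1 3 ⊓ (Sᶜ ⊓ w)ᶜ) := by
      have hSc : C.d 1 3 ⊓ S ≤ C.d 1 3 ⊓ (Sᶜ ⊓ w)ᶜ := by
        refine inf_le_inf_left _ ?_
        rw [compl_inf, compl_compl]
        exact le_sup_left
      calc C.d 1 3 ⊓ w ⊓ Sᶜ ≤ w := le_trans inf_le_left inf_le_right
        _ ≤ R := hstep3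
        _ = C.c 1 (C.d 1 3 ⊓ S) := hR
        _ ≤ C.c 1 (C.d 1 3 ⊓ (Sᶜ ⊓ w)ᶜ) := mono 1 _ _ hSc
    exact le_bot_iff.1 (le_trans (le_inf hle1 hle2) (le_of_eq hdisj))
  have hB : C.d 1 3 ⊓ w ≤ S := by
    rw [← sdiff_eq] at hkey
    exact sdiff_eq_bot_iff.mp hkey
  refine le_inf ?_ ?_
  · have h6 : C.c 3 (C.d 1 3 ⊓ w) ≤ C.c 3 S := mono 3 _ _ hB
    rwa [hS3] at h6
  · have h7 : C.c 3 (C.d 1 3 ⊓ w) ≤ C.c 3 T := mono 3 _ _ (le_trans inf_le_right hA)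
    rwa [hT3] at h7
end

section
/- Let F be a field of characteristic 0, let ι be a type with at least two elements, let V be the finitely supported functions ι →₀ F and W the finitely supported functions (ι ⊕ ℕ) →₀ F, and define ψ : Set V → Set W by ψ(X) = {s ∈ W : the finitely supported function i ↦ s(Sum.inl i) belongs to X}. Then: ψ is injective; ψ(∅) = ∅ and ψ(V) = W; ψ(X ∪ Y) = ψ(X) ∪ ψ(Y) and ψ(Xᶜ) = ψ(X)ᶜ; for all i, j ∈ ι, ψ({s ∈ V : s i = s j}) = {s ∈ W : s(inl i) = s(inl j)}; for every i ∈ ι, ψ(C_i X) = C_{inl i}(ψ X); and the range of ψ is exactly {Y ⊆ W : C_{inr k} Y = Y for every k ∈ ℕ}. (This exhibits the powerset algebra of V as the full neat ι-reduct of the powerset algebra of W.) -/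
/-- Cylindrification of a set of finitely supported functions in coordinate `i`. -/
def Cyl {κ : Type*} {M : Type*} [Zero M] (i : κ) (Y : Set (κ →₀ M)) : Set (κ →₀ M) :=
  {s | ∃ t ∈ Y, ∀ j, j ≠ i → s j = t j}

/-- The map exhibiting `℘(ι →₀ F)` as the neat `ι`-reduct of `℘((ι ⊕ ℕ) →₀ F)`. -/
def psi (ι F : Type*) [Zero F] : Set (ι →₀ F) → Set ((ι ⊕ ℕ) →₀ F) := fun X =>
  {s | Finsupp.comapDomain Sum.inl s Sum.inl_injective.injOn ∈ X}

/-!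
`ψ X` only constrains the `ι`-coordinates, so it is invariant under every `C_{inr k}`.
Conversely, a set `Y` fixed by every `C_{inr k}` is closed under changing one `ℕ`-coordinate
at a time; since `s` has finite support, finitely many such changes turn `s` into its
restriction to `ι` extended by zero, so membership in `Y` depends only on the `ι`-part and
`Y = ψ {v | v extended by zero ∈ Y}`. Injectivity holds because every `v` has such an extension.
-/

section Cylindrification

variable {κ M : Type*} [Zero M] {Y : Set (κ →₀ M)} {s t : κ →₀ M}

theorem subset_cyl (i : κ) (Y : Set (κ →₀ M)) : Y ⊆ Cyl i Y :=
  fun s hs => ⟨s, hs, fun _ _ => rfl⟩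

theorem mem_iff_of_cyl_eq_self {i : κ} (hY : Cyl i Y = Y) (h : ∀ j ≠ i, s j = t j) :
    s ∈ Y ↔ t ∈ Y :=
  ⟨fun hs => hY ▸ ⟨s, hs, fun j hj => (h j hj).symm⟩, fun ht => hY ▸ ⟨t, ht, h⟩⟩

theorem mem_iff_of_forall_notMem_eq (S : Finset κ) (hY : ∀ k ∈ S, Cyl k Y = Y)
    (h : ∀ j ∉ S, s j = t j) : s ∈ Y ↔ t ∈ Y := by
  classical
  induction S using Finset.induction_on generalizing s with
  | empty => rw [Finsupp.ext fun j => h j (Finset.notMem_empty j)]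
  | insert k S _ ih =>
    have hYk := hY k (Finset.mem_insert_self k S)
    calc s ∈ Y ↔ s.update k (t k) ∈ Y :=
          mem_iff_of_cyl_eq_self hYk fun j hj => by simp [Finsupp.update_apply, hj]
      _ ↔ t ∈ Y := by
          refine ih (fun k' hk' => hY k' (Finset.mem_insert_of_mem hk')) fun j hj => ?_
          by_cases hjk : j = k
          · simp [hjk]
          · simpa [Finsupp.update_apply, hjk] using h j (by simp [hj, hjk])

end Cylindrification

section NeatReduct

variable {ι F : Type*} [Zero F]

theorem mem_psi {X : Set (ι →₀ F)} {s : (ι ⊕ ℕ) →₀ F} :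
    s ∈ psi ι F X ↔ s.comapDomain Sum.inl Sum.inl_injective.injOn ∈ X :=
  Iff.rfl

theorem psi_injective : Function.Injective (psi ι F) := by
  intro X Y hXY
  ext v
  simpa [mem_psi] using Set.ext_iff.mp hXY (Finsupp.embDomain .inl v)

theorem psi_cyl_inl (i : ι) (X : Set (ι →₀ F)) :
    psi ι F (Cyl i X) = Cyl (Sum.inl i) (psi ι F X) := by
  classical
  ext s
  constructor
  · rintro ⟨t, ht, hst⟩
    refine ⟨s.update (Sum.inl i) (t i), mem_psi.mpr ?_, fun j hj => by simp [hj]⟩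
    convert ht using 1
    ext j
    by_cases hji : j = i
    · simp [hji]
    · simpa [hji] using hst j hji
  · rintro ⟨t, ht, hst⟩
    exact ⟨_, ht, fun j hj => hst (Sum.inl j) (by simpa using hj)⟩

theorem cyl_inr_psi (k : ℕ) (X : Set (ι →₀ F)) :
    Cyl (Sum.inr k) (psi ι F X) = psi ι F X := by
  refine Set.Subset.antisymm ?_ (subset_cyl _ _)
  rintro s ⟨t, ht, hst⟩
  rw [mem_psi] at ht ⊢
  convert ht using 1
  ext j
  simpa using hst (Sum.inl j) Sum.inl_ne_inr

theorem eq_psi_of_forall_cyl_inr {Y : Set ((ι ⊕ ℕ) →₀ F)}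
    (hY : ∀ k : ℕ, Cyl (Sum.inr k) Y = Y) :
    Y = psi ι F {v | Finsupp.embDomain .inl v ∈ Y} := by
  classical
  ext s
  refine mem_iff_of_forall_notMem_eq (s.support.filter (·.isRight)) ?_ ?_
  · intro k hk
    obtain ⟨n, rfl⟩ := Sum.isRight_iff.mp (Finset.mem_filter.mp hk).2
    exact hY n
  · rintro (i | n) hj
    · simp
    · rw [Finsupp.embDomain_of_notMem_range _ _ _ (by simp)]
      simpa using hj

theorem range_psi :
    Set.range (psi ι F) =
      {Y : Set ((ι ⊕ ℕ) →₀ F) | ∀ k : ℕ, Cyl (Sum.inr k) Y = Y} := by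
  ext Y
  exact ⟨fun ⟨X, hX⟩ k => hX ▸ cyl_inr_psi k X,
    fun hY => ⟨_, (eq_psi_of_forall_cyl_inr hY).symm⟩⟩

end NeatReduct

theorem psi_neat_reduct_general (F : Type) [Field F] (ι : Type) :
    Function.Injective (psi ι F) ∧
    psi ι F ∅ = ∅ ∧
    psi ι F Set.univ = Set.univ ∧
    (∀ X Y : Set (ι →₀ F), psi ι F (X ∪ Y) = psi ι F X ∪ psi ι F Y) ∧
    (∀ X : Set (ι →₀ F), psi ι F Xᶜ = (psi ι F X)ᶜ) ∧
    (∀ i j : ι, psi ι F {s | s i = s j} = {s | s (Sum.inl i) = s (Sum.inl j)}) ∧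
    (∀ (i : ι) (X : Set (ι →₀ F)), psi ι F (Cyl i X) = Cyl (Sum.inl i) (psi ι F X)) ∧
    Set.range (psi ι F) = {Y : Set ((ι ⊕ ℕ) →₀ F) | ∀ k : ℕ, Cyl (Sum.inr k) Y = Y} :=
  ⟨psi_injective, rfl, rfl, fun _ _ => rfl, fun _ => rfl, fun _ _ => rfl, psi_cyl_inl,
    range_psi⟩

/-- the powerset algebra of `ι →₀ F` is the full neat `ι`-reduct of the
powerset algebra of `(ι ⊕ ℕ) →₀ F`, via `ψ`. -/
theorem psi_neat_reduct (F : Type) [Field F] [CharZero F] (ι : Type)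
    (hι : ∃ a b : ι, a ≠ b) :
    Function.Injective (psi ι F) ∧
    psi ι F ∅ = ∅ ∧
    psi ι F Set.univ = Set.univ ∧
    (∀ X Y : Set (ι →₀ F), psi ι F (X ∪ Y) = psi ι F X ∪ psi ι F Y) ∧
    (∀ X : Set (ι →₀ F), psi ι F Xᶜ = (psi ι F X)ᶜ) ∧
    (∀ i j : ι, psi ι F {s | s i = s j} = {s | s (Sum.inl i) = s (Sum.inl j)}) ∧
    (∀ (i : ι) (X : Set (ι →₀ F)), psi ι F (Cyl i X) = Cyl (Sum.inl i) (psi ι F X)) ∧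
    Set.range (psi ι F) = {Y : Set ((ι ⊕ ℕ) →₀ F) | ∀ k : ℕ, Cyl (Sum.inr k) Y = Y} :=
  psi_neat_reduct_general F ι
end

section
/- Let u be a nonprincipal ultrafilter on ℕ and let (G_n)_{n∈ℕ} be a family of simple graphs such that for every n, G_n contains no cycle of length at most n. Then the ultraproduct graph ∏_u G_n is acyclic; in particular it admits a proper colouring with 2 colours (its chromatic number is at most 2). -/
/-- The setoid on the dependent product identifying functions agreeing on a set in `u`. -/
def upSetoid (u : Ultrafilter ℕ) (V : ℕ → Type*) : Setoid (∀ n, V n) where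
  r f g := {n | f n = g n} ∈ u
  iseqv := by
    refine ⟨fun f => ?_, fun {f g} h => ?_, fun {f g h} h1 h2 => ?_⟩
    · simp only [Set.setOf_true]; exact Filter.univ_mem
    · have : {n | f n = g n} ⊆ {n | g n = f n} := fun n hn => hn.symm
      exact Filter.mem_of_superset h this
    · have : {n | f n = g n} ∩ {n | g n = h n} ⊆ {n | f n = h n} :=
        fun n hn => hn.1.trans hn.2
      exact Filter.mem_of_superset (Filter.inter_mem h1 h2) this

/-- The ultraproduct of a family of simple graphs over an ultrafilter on ℕ. -/
def upGraph (u : Ultrafilter ℕ) (V : ℕ → Type*) (G : ∀ n, SimpleGraph (V n)) :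
    SimpleGraph (Quotient (upSetoid u V)) where
  Adj x y := Quotient.liftOn₂ x y (fun f g => {n | (G n).Adj (f n) (g n)} ∈ u)
    (by
      intro f g f' g' hf hg
      have key : ∀ {a a' b b' : ∀ n, V n}, {n | a n = a' n} ∈ u → {n | b n = b' n} ∈ u →
          {n | (G n).Adj (a n) (b n)} ∈ u → {n | (G n).Adj (a' n) (b' n)} ∈ u := by
        intro a a' b b' ha hb hadj
        have : {n | a n = a' n} ∩ {n | b n = b' n} ∩ {n | (G n).Adj (a n) (b n)} ⊆
            {n | (G n).Adj (a' n) (b' n)} := by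
          rintro n ⟨⟨h1, h2⟩, h3⟩
          simp only [Set.mem_setOf_eq] at *
          rw [← h1, ← h2]
          exact h3
        exact Filter.mem_of_superset (Filter.inter_mem (Filter.inter_mem ha hb) hadj) this
      have hf' : {n | f' n = f n} ∈ u :=
        Filter.mem_of_superset hf fun n hn => hn.symm
      have hg' : {n | g' n = g n} ∈ u :=
        Filter.mem_of_superset hg fun n hn => hn.symm
      exact propext ⟨fun h => key hf hg h, fun h => key hf' hg' h⟩)
  symm := by
    constructor
    intro x y
    induction x using Quotient.ind with
    | _ f =>
    induction y using Quotient.ind with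
    | _ g =>
    intro h
    have hsub : {n | (G n).Adj (f n) (g n)} ⊆ {n | (G n).Adj (g n) (f n)} :=
      fun n hn => (G n).symm.symm _ _ hn
    exact Filter.mem_of_superset h hsub
  loopless := by
    constructor
    intro x
    induction x using Quotient.ind with
    | _ f =>
    intro h
    have hempty : ({n | (G n).Adj (f n) (f n)} : Set ℕ) = ∅ := by
      ext n
      simp only [Set.mem_setOf_eq, Set.mem_empty_iff_false, iff_false]
      exact fun hn => (G n).loopless.irrefl _ hn
    have h' : {n | (G n).Adj (f n) (f n)} ∈ u := h
    rw [hempty] at h'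
    exact Filter.empty_notMem (u : Filter ℕ) h'

/-! A cycle in the ultraproduct has finitely many vertices, so for `u`-almost every `n` the
`n`-th coordinates of (representatives of) its vertices are pairwise distinct and adjacent
wherever the vertices are. For such `n` the cycle projects to a cycle of the same length in
`G n`, and nonprincipality lets us pick such an `n` at least that length. -/

namespace SimpleGraph

variable {V W : Type*} {G : SimpleGraph V} {G' : SimpleGraph W}

theorem Walk.IsCycle.exists_isCycle_of_injOn {φ : V → W} {v : V} {c : G.Walk v v}
    (hc : c.IsCycle) (hinj : Set.InjOn φ {x | x ∈ c.support})
    (hadj : ∀ a ∈ c.support, ∀ b ∈ c.support, G.Adj a b → G'.Adj (φ a) (φ b)) :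
    ∃ c' : G'.Walk (φ v) (φ v), c'.IsCycle ∧ c'.length = c.length := by
  set s : Set V := {x | x ∈ c.support}
  let d := c.induce s fun _ hx => hx
  have hd : d.map (Embedding.induce s).toHom = c := Walk.map_induce c _
  let f : G.induce s →g G' := ⟨fun z => φ z, fun {a b} h => hadj a a.2 b b.2 h⟩
  have hf : Function.Injective f := fun a b h => Subtype.ext (hinj a.2 b.2 h)
  refine ⟨d.map f, ?_, ?_⟩
  · rw [Walk.isCycle_map_iff_of_injective hf,
      ← Walk.isCycle_map_iff_of_injective (f := (Embedding.induce s).toHom) Subtype.val_injective,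
      hd]
    exact hc
  · rw [Walk.length_map, ← Walk.length_map (Embedding.induce s).toHom, hd]
    rfl

end SimpleGraph

namespace upGraph

variable {u : Ultrafilter ℕ} {V : ℕ → Type*} {G : ∀ n, SimpleGraph (V n)}

theorem adj_iff_eventually_adj_out (x y : Quotient (upSetoid u V)) :
    (upGraph u V G).Adj x y ↔ ∀ᶠ n in u, (G n).Adj (x.out n) (y.out n) := by
  conv_lhs => rw [← Quotient.out_eq x, ← Quotient.out_eq y]
  rfl

theorem eventually_out_eq_imp_eq (x y : Quotient (upSetoid u V)) :
    ∀ᶠ n in u, x.out n = y.out n → x = y := by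
  by_cases h : x = y
  · exact .of_forall fun _ _ => h
  · have : ¬∀ᶠ n in u, x.out n = y.out n := fun hxy => h (Quotient.out_equiv_out.1 hxy)
    filter_upwards [Ultrafilter.eventually_not.2 this] with n hn hxy using absurd hxy hn

theorem eventually_injOn_out_and_adj {s : Set (Quotient (upSetoid u V))} (hs : s.Finite) :
    ∀ᶠ n in u, Set.InjOn (fun x => x.out n) s ∧
      ∀ x ∈ s, ∀ y ∈ s, (upGraph u V G).Adj x y → (G n).Adj (x.out n) (y.out n) := by
  have hpairs : ∀ {p : Quotient (upSetoid u V) → Quotient (upSetoid u V) → ℕ → Prop},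
      (∀ x y, ∀ᶠ n in u, p x y n) → ∀ᶠ n in u, ∀ x ∈ s, ∀ y ∈ s, p x y n := fun h =>
    (Filter.eventually_all_finite hs).2 fun x _ => (Filter.eventually_all_finite hs).2
      fun y _ => h x y
  refine (hpairs eventually_out_eq_imp_eq).and (hpairs fun x y => ?_)
  by_cases h : (upGraph u V G).Adj x y
  · filter_upwards [(adj_iff_eventually_adj_out x y).1 h] with n hn _ using hn
  · exact .of_forall fun _ h' => absurd h' h

end upGraph

/-- if `u` is nonprincipal and each `G n` has no cycle of length at most `n`,
then the ultraproduct graph is acyclic, and in particular 2-colourable. -/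
theorem upGraph_acyclic (u : Ultrafilter ℕ)
    (hu : ∀ s : Set ℕ, sᶜ.Finite → s ∈ u)
    (V : ℕ → Type) (G : ∀ n, SimpleGraph (V n))
    (hG : ∀ n : ℕ, ∀ (v : V n) (c : (G n).Walk v v), c.IsCycle → n < c.length) :
    (upGraph u V G).IsAcyclic ∧ (upGraph u V G).Colorable 2 := by
  have hacyclic : (upGraph u V G).IsAcyclic := by
    intro x c hc
    have hlarge : ∀ᶠ n in u, c.length ≤ n :=
      hu _ (Nat.cofinite_eq_atTop ▸ Filter.eventually_ge_atTop c.length : ∀ᶠ n in .cofinite, _)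
    obtain ⟨n, ⟨hinj, hadj⟩, hn⟩ :=
      ((upGraph.eventually_injOn_out_and_adj c.support.finite_toSet).and hlarge).exists
    obtain ⟨c', hc', hlen⟩ := hc.exists_isCycle_of_injOn hinj hadj
    exact (hG n _ c' hc').not_ge (hlen ▸ hn)
  exact ⟨hacyclic, hacyclic.colorable_two⟩
end

section
/- There exists a family (G_n)_{n∈ℕ} of simple graphs, each admitting no proper colouring with finitely many colours (each G_n has infinite chromatic number), such that for every nonprincipal ultrafilter u on ℕ the ultraproduct graph ∏_u G_n is acyclic and hence has chromatic number at most 2. -/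
open Filter Finset SimpleGraph

/-! ### Counting -/

lemma Finset.card_filter_forall_mem_eq {α β : Type*} [Fintype α] [DecidableEq α] [Fintype β]
    [DecidableEq β] (S : Finset α) (A : Finset β) :
    #{ω : α → β | ∀ e ∈ S, ω e ∈ A}
      = #A ^ #S * Fintype.card β ^ (Fintype.card α - #S) := by
  have hpi : ({ω : α → β | ∀ e ∈ S, ω e ∈ A} : Finset _)
      = Fintype.piFinset fun e => if e ∈ S then A else univ := by
    ext ω
    simp only [mem_filter, mem_univ, true_and, Fintype.mem_piFinset]
    refine forall_congr' fun e => ?_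
    split_ifs <;> simp [*]
  simp only [hpi, Fintype.card_piFinset, apply_ite card, card_univ, prod_ite, prod_const]
  simp [filter_not, card_univ_sdiff]

lemma Finset.sum_card_eq_sum_card_filter_mem {α β : Type*} [Fintype α] [Fintype β]
    [DecidableEq β] (F : α → Finset β) : ∑ x, #(F x) = ∑ y, #{x | y ∈ F x} := by
  simp only [card_eq_sum_ones, sum_filter]
  rw [sum_comm]
  refine sum_congr rfl fun x _ => ?_
  rw [← sum_filter, filter_mem_eq_inter, univ_inter]

lemma exists_lt_and_eq_zero_of_sum_add_mul_lt {α : Type*} [Fintype α] {f h : α → ℕ} {c : ℕ}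
    (hs : ∑ x, (f x + c * h x) < c * Fintype.card α) : ∃ x, f x < c ∧ h x = 0 := by
  by_contra! hx
  refine hs.not_ge ?_
  calc c * Fintype.card α = ∑ _x : α, c := by simp [mul_comm]
    _ ≤ ∑ x, (f x + c * h x) := sum_le_sum fun x _ => ?_
  by_cases hfx : f x < c
  · exact (Nat.le_mul_of_pos_right c (Nat.pos_of_ne_zero (hx x hfx))).trans (Nat.le_add_left _ _)
  · omega

lemma two_mul_pow_le_succ_pow (t : ℕ) : 2 * t ^ (t + 1) ≤ (t + 1) ^ (t + 1) := by
  have h := pow_add_mul_le_add_pow (a := t) (b := 1) (Nat.zero_le t) (by omega) (t + 1)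
  have h' : t ^ (t + 1) ≤ (t + 1) * t ^ t := by rw [pow_succ, mul_comm]; gcongr; omega
  simp only [Nat.add_sub_cancel, mul_one, Nat.cast_id] at h
  omega

lemma two_pow_mul_pow_le_succ_pow {t m C : ℕ} (h : (t + 1) * m ≤ C) :
    2 ^ m * t ^ C ≤ (t + 1) ^ C := by
  obtain ⟨r, rfl⟩ := Nat.exists_eq_add_of_le h
  calc 2 ^ m * t ^ ((t + 1) * m + r) = (2 * t ^ (t + 1)) ^ m * t ^ r := by
        rw [pow_add, pow_mul, mul_pow, mul_assoc]
    _ ≤ ((t + 1) ^ (t + 1)) ^ m * (t + 1) ^ r := by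
        gcongr
        · exact two_mul_pow_le_succ_pow t
        · omega
    _ = (t + 1) ^ ((t + 1) * m + r) := by rw [← pow_mul, ← pow_add]

lemma sum_Icc_pow_mul_pow_le {q M g E : ℕ} (hM : 1 ≤ M) (hg : g ≤ E) :
    ∑ L ∈ Icc 3 g, (q * M) ^ L * q ^ (E - L) ≤ g * M ^ g * q ^ E := by
  calc ∑ L ∈ Icc 3 g, (q * M) ^ L * q ^ (E - L)
        = ∑ L ∈ Icc 3 g, M ^ L * q ^ E := sum_congr rfl fun L hL => by
          rw [mul_pow, mul_comm (q ^ L), mul_assoc, ← pow_add,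
            Nat.add_sub_cancel' ((mem_Icc.1 hL).2.trans hg)]
    _ ≤ ∑ L ∈ Icc 3 g, M ^ g * q ^ E := sum_le_sum fun L hL =>
          Nat.mul_le_mul_right _ (Nat.pow_le_pow_right hM (mem_Icc.1 hL).2)
    _ ≤ g * M ^ g * q ^ E := by
          rw [sum_const, Nat.card_Icc, smul_eq_mul, mul_assoc]
          gcongr
          omega

/-- Up to the factor `(t + 1) ^ (N + 1).choose 2`, the number of labellings
`Sym2 (Fin N) → Fin (t + 1)`, the two summands bound twice the expected number of short labelled
cycles and `N` times the expected number of independent `(a + 1)`-sets of a random graph with edge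
probability `1 / (t + 1)`. -/
lemma erdos_count_bound_lt {N t a M g : ℕ} (hM : 1 ≤ M) (hN : N = (t + 1) * M)
    (hgN : 8 * g * M ^ g ≤ N) (haN : a ≤ N) (hC : (t + 1) * (N + 1) ≤ (a + 1).choose 2) :
    2 * ∑ L ∈ Icc 3 g, N ^ L * (t + 1) ^ ((N + 1).choose 2 - L)
      + N * (2 ^ N * (t ^ (a + 1).choose 2 * (t + 1) ^ ((N + 1).choose 2 - (a + 1).choose 2)))
      < N * (t + 1) ^ (N + 1).choose 2 := by
  set E := (N + 1).choose 2
  set C := (a + 1).choose 2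
  have hNE : N ≤ E := by simp [E, Nat.choose_succ_succ']
  have hCE : C ≤ E := Nat.choose_le_choose 2 (by omega)
  have hgE : g ≤ E := by nlinarith [Nat.one_le_pow g M hM]
  have hcyc : ∑ L ∈ Icc 3 g, N ^ L * (t + 1) ^ (E - L) ≤ g * M ^ g * (t + 1) ^ E :=
    hN ▸ sum_Icc_pow_mul_pow_le hM hgE
  have hind : 2 * (2 ^ N * (t ^ C * (t + 1) ^ (E - C))) ≤ (t + 1) ^ E :=
    calc 2 * (2 ^ N * (t ^ C * (t + 1) ^ (E - C))) = 2 ^ (N + 1) * t ^ C * (t + 1) ^ (E - C) := by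
          ring
      _ ≤ (t + 1) ^ C * (t + 1) ^ (E - C) := by gcongr; exact two_pow_mul_pow_le_succ_pow hC
      _ = (t + 1) ^ E := by rw [← pow_add, Nat.add_sub_cancel' hCE]
  have hpos : 0 < N * (t + 1) ^ E := by rw [hN]; positivity
  nlinarith [Nat.mul_le_mul_right ((t + 1) ^ E) hgN, Nat.mul_le_mul_left N hind]

lemma exists_erdos_parameters (g k : ℕ) : ∃ N t a M : ℕ, 1 ≤ M ∧ N = (t + 1) * M ∧
    8 * g * M ^ g ≤ N ∧ a ≤ N ∧ (t + 1) * (N + 1) ≤ (a + 1).choose 2 ∧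
    2 * k * a ≤ N := by
  -- `m² = 4 (k + 1) m + m` is what makes `a (a + 1)` exceed `2 (t + 1) (N + 1)` below.
  obtain ⟨m, hm⟩ : ∃ m, m = 4 * k + 5 := ⟨_, rfl⟩
  obtain ⟨M, hM⟩ : ∃ M, M = 2 * (k + 1) * m := ⟨_, rfl⟩
  obtain ⟨t, ht⟩ : ∃ t, t = 8 * (g + 1) * M ^ g := ⟨_, rfl⟩
  set N := (t + 1) * M
  set a := (t + 1) * m
  have hM1 : 1 ≤ M := by rw [hM, hm]; nlinarith
  have hC : 2 * (a + 1).choose 2 = (a + 1) * a := by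
    have h := Nat.choose_two_right (a + 1)
    have hev : 2 ∣ (a + 1) * a := (Nat.even_mul_succ_self a).two_dvd.trans (by rw [mul_comm])
    rw [Nat.add_sub_cancel] at h
    omega
  have key : (a + 1) * a + 2 * (t + 1)
      = 2 * ((t + 1) * (N + 1)) + (t + 1) * (t + 1) * m + (t + 1) * m := by
    simp only [N, a]
    rw [hM, hm]
    ring
  have h2 : 2 * (t + 1) ≤ (t + 1) * (t + 1) * m + (t + 1) * m := by rw [hm]; nlinarith
  refine ⟨N, t, a, M, hM1, rfl, ?_, ?_, by omega, ?_⟩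
  · have : t + 1 ≤ N := Nat.le_mul_of_pos_right _ hM1
    nlinarith [Nat.one_le_pow g M hM1]
  · exact Nat.mul_le_mul_left _ (by rw [hM]; nlinarith)
  · simp only [N, a]
    rw [hM]
    nlinarith

namespace SimpleGraph

variable {V : Type*}

lemma lt_egirth_iff {G : SimpleGraph V} {n : ℕ} :
    (n : ℕ∞) < G.egirth ↔ ∀ L, 3 ≤ L → L ≤ n → (cycleGraph L).Free G := by
  refine ⟨fun h L hL hLn hC => ?_, fun h => ?_⟩
  · obtain ⟨v, p, hp, rfl⟩ := (cycleGraph_isContained_iff hL).1 hC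
    exact (egirth_le_length hp).not_gt (h.trans_le' (by exact_mod_cast hLn))
  · by_contra! hle
    have hG : ¬ G.IsAcyclic := fun hG => by simp [hG.egirth_eq_top] at hle
    obtain ⟨v, p, hp, hlen⟩ := exists_egirth_eq_length.2 hG
    refine h p.length hp.three_le_length (by exact_mod_cast hlen ▸ hle)
      ((cycleGraph_isContained_iff hp.three_le_length).2 ⟨v, p, hp, rfl⟩)

lemma IndepSetFree.comap {W : Type*} {G : SimpleGraph V} {H : SimpleGraph W} {n : ℕ}
    (f : H ↪g G) (h : G.IndepSetFree n) : H.IndepSetFree n := by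
  rw [← cliqueFree_compl] at h ⊢
  exact h.comap (Embedding.complEquiv f).isContained

lemma cycleGraph_adj_finRotate {L : ℕ} (hL : 2 ≤ L) (i : Fin L) :
    (cycleGraph L).Adj i (finRotate L i) := by
  obtain ⟨n, rfl⟩ : ∃ n, L = n + 2 := ⟨L - 2, by omega⟩
  simp [cycleGraph_adj, finRotate_apply]

/-! ### Short cycles and independent sets in finite graphs -/

section Finite

variable [Fintype V] {G : SimpleGraph V}

lemma Colorable.exists_isNIndepSet [DecidableEq V] {k a : ℕ} (hG : G.Colorable k)
    (h : k * a < Fintype.card V) : ∃ s, G.IsNIndepSet (a + 1) s := by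
  obtain ⟨C⟩ := hG
  obtain ⟨y, -, hy⟩ := exists_lt_card_fiber_of_mul_lt_card_of_maps_to (s := univ)
    (t := (univ : Finset (Fin k))) (f := C) (fun v _ => mem_univ _) (by simpa using h)
  obtain ⟨s, hs, hcard⟩ := exists_subset_card_eq hy
  refine ⟨s, ⟨fun v hv w hw _ hadj => C.valid hadj ?_, hcard⟩⟩
  rw [(mem_filter.1 (hs hv)).2, (mem_filter.1 (hs hw)).2]

noncomputable def labelledCycles (G : SimpleGraph V) (L : ℕ) : Finset (Fin L → V) := by
  classical exact {c | Function.Injective c ∧ ∀ i, G.Adj (c i) (c (finRotate L i))}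

lemma mem_labelledCycles {L : ℕ} {c : Fin L → V} :
    c ∈ G.labelledCycles L ↔
      Function.Injective c ∧ ∀ i, G.Adj (c i) (c (finRotate L i)) := by
  simp [labelledCycles]

lemma Copy.coe_mem_labelledCycles {L : ℕ} (φ : Copy (cycleGraph L) G) (hL : 2 ≤ L) :
    ⇑φ ∈ G.labelledCycles L :=
  mem_labelledCycles.2 ⟨φ.injective, fun i => φ.toHom.map_adj (cycleGraph_adj_finRotate hL i)⟩

lemma exists_card_le_lt_egirth_induce_compl [DecidableEq V] (G : SimpleGraph V) (g : ℕ) :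
    ∃ D : Finset V, #D ≤ ∑ L ∈ Icc 3 g, #(G.labelledCycles L) ∧
      (g : ℕ∞) < (G.induce (D : Set V)ᶜ).egirth := by
  refine ⟨(Icc 3 g).attach.biUnion fun L => (G.labelledCycles L).image fun c =>
    c ⟨0, by have := (mem_Icc.1 L.2).1; omega⟩, ?_, ?_⟩
  · refine card_biUnion_le.trans ?_
    rw [← sum_attach (Icc 3 g)]
    exact sum_le_sum fun L _ => card_image_le
  · refine lt_egirth_iff.2 fun L hL hLg ⟨φ⟩ => (φ ⟨0, by omega⟩).2 ?_
    have hc := ((Copy.induce G _).comp φ).coe_mem_labelledCycles (by omega)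
    exact mem_biUnion.2
      ⟨⟨L, mem_Icc.2 ⟨hL, hLg⟩⟩, mem_attach _ _, mem_image_of_mem _ hc⟩

end Finite

/-! ### Random graphs -/

section LabelGraph

variable {V : Type*} {t : ℕ}

/-- For uniformly random labels `ω` this is the random graph with edge probability
`1 / (t + 1)`. -/
def labelGraph (ω : Sym2 V → Fin (t + 1)) : SimpleGraph V := fromEdgeSet {e | ω e = 0}

lemma labelGraph_adj {ω : Sym2 V → Fin (t + 1)} {v w : V} :
    (labelGraph ω).Adj v w ↔ ω s(v, w) = 0 ∧ v ≠ w :=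
  fromEdgeSet_adj _

variable [Fintype V] [DecidableEq V]

instance (ω : Sym2 V → Fin (t + 1)) : DecidableRel (labelGraph ω).Adj :=
  fun _ _ => decidable_of_iff' _ labelGraph_adj

lemma card_labelGraph_mem_labelledCycles_le {L : ℕ} (hL : 3 ≤ L) (c : Fin L → V) :
    #{ω : Sym2 V → Fin (t + 1) | c ∈ (labelGraph ω).labelledCycles L}
      ≤ (t + 1) ^ (Fintype.card (Sym2 V) - L) := by
  by_cases hc : Function.Injective c
  · set S := univ.image fun i => s(c i, c (finRotate L i))
    have hS : #S = L := by
      obtain ⟨n, rfl⟩ : ∃ n, L = n + 3 := ⟨L - 3, by omega⟩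
      refine (card_image_of_injective _ fun i j hij => ?_).trans (card_fin _)
      simp only [finRotate_apply] at hij
      rcases Sym2.eq_iff.1 hij with ⟨h, -⟩ | ⟨h₁, h₂⟩
      · exact hc h
      · have h2 : j + 1 + 1 = j := by rw [← hc h₁, hc h₂]
        rw [add_assoc, add_eq_left, Fin.ext_iff] at h2
        simp only [Fin.val_add, Fin.val_one, Fin.val_zero] at h2
        rw [Nat.mod_eq_of_lt (by omega)] at h2
        omega
    calc _ ≤ #{ω : Sym2 V → Fin (t + 1) | ∀ e ∈ S, ω e ∈ ({0} : Finset _)} := by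
          refine card_le_card fun ω hω => ?_
          simp only [S, mem_filter, mem_univ, true_and, mem_labelledCycles, mem_image,
            mem_singleton] at hω ⊢
          rintro e ⟨i, -, rfl⟩
          exact (labelGraph_adj.1 (hω.2 i)).1
      _ = _ := by rw [card_filter_forall_mem_eq, hS]; simp
  · simp [mem_labelledCycles, hc]

lemma sum_card_labelledCycles_labelGraph_le {L : ℕ} (hL : 3 ≤ L) :
    ∑ ω : Sym2 V → Fin (t + 1), #((labelGraph ω).labelledCycles L)
      ≤ Fintype.card V ^ L * (t + 1) ^ (Fintype.card (Sym2 V) - L) := by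
  rw [sum_card_eq_sum_card_filter_mem]
  refine (sum_le_sum fun c _ => card_labelGraph_mem_labelledCycles_le hL c).trans ?_
  simp

lemma card_labelGraph_isNIndepSet_le (n : ℕ) (A : Finset V) :
    #{ω : Sym2 V → Fin (t + 1) | (labelGraph ω).IsNIndepSet n A}
      ≤ t ^ n.choose 2 * (t + 1) ^ (Fintype.card (Sym2 V) - n.choose 2) := by
  by_cases hA : #A = n
  · set S := A.offDiag.image Sym2.mk.uncurry
    calc _ ≤ #{ω : Sym2 V → Fin (t + 1) | ∀ e ∈ S, ω e ∈ ({0}ᶜ : Finset _)} := by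
          refine card_le_card fun ω hω => ?_
          simp only [S, mem_filter, mem_univ, true_and, mem_image, mem_offDiag, mem_compl,
            mem_singleton] at hω ⊢
          rintro e ⟨⟨v, w⟩, ⟨hv, hw, hvw⟩, rfl⟩ h0
          exact hω.isIndepSet hv hw hvw (labelGraph_adj.2 ⟨h0, hvw⟩)
      _ = _ := by rw [card_filter_forall_mem_eq, Sym2.card_image_offDiag, hA]; simp [card_compl]
  · simp [isNIndepSet_iff, hA]

lemma sum_card_indepSetFinset_labelGraph_le (n : ℕ) :
    ∑ ω : Sym2 V → Fin (t + 1), #((labelGraph ω).indepSetFinset n)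
      ≤ 2 ^ Fintype.card V *
        (t ^ n.choose 2 * (t + 1) ^ (Fintype.card (Sym2 V) - n.choose 2)) := by
  rw [sum_card_eq_sum_card_filter_mem]
  simp only [mem_indepSetFinset_iff]
  refine (sum_le_sum fun A _ => card_labelGraph_isNIndepSet_le n A).trans ?_
  simp

lemma exists_labelGraph_two_mul_sum_card_labelledCycles_lt_indepSetFree (g n : ℕ)
    (h : 2 * ∑ L ∈ Icc 3 g, Fintype.card V ^ L * (t + 1) ^ (Fintype.card (Sym2 V) - L)
      + Fintype.card V * (2 ^ Fintype.card V *
        (t ^ n.choose 2 * (t + 1) ^ (Fintype.card (Sym2 V) - n.choose 2)))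
      < Fintype.card V * (t + 1) ^ Fintype.card (Sym2 V)) :
    ∃ ω : Sym2 V → Fin (t + 1), 2 * ∑ L ∈ Icc 3 g, #((labelGraph ω).labelledCycles L)
      < Fintype.card V ∧ (labelGraph ω).IndepSetFree n := by
  obtain ⟨ω, hcyc, hind⟩ := exists_lt_and_eq_zero_of_sum_add_mul_lt
    (f := fun ω : Sym2 V → Fin (t + 1) =>
      2 * ∑ L ∈ Icc 3 g, #((labelGraph ω).labelledCycles L))
    (h := fun ω => #((labelGraph ω).indepSetFinset n)) (c := Fintype.card V) <| by
    rw [sum_add_distrib, ← mul_sum, ← mul_sum, sum_comm]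
    refine lt_of_le_of_lt ?_ (h.trans_eq (by simp))
    gcongr with L hL
    · exact sum_card_labelledCycles_labelGraph_le (mem_Icc.1 hL).1
    · exact sum_card_indepSetFinset_labelGraph_le n
  refine ⟨ω, hcyc, fun s hs => ?_⟩
  rw [card_eq_zero] at hind
  simpa [hind] using (mem_indepSetFinset_iff (G := labelGraph ω)).2 hs

end LabelGraph

/-! ### Disjoint unions -/

section Sigma

variable {ι : Type*} {W : ι → Type*} {H : ∀ i, SimpleGraph (W i)}

def sigma (H : ∀ i, SimpleGraph (W i)) : SimpleGraph (Σ i, W i) :=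
  ⨆ i, (H i).map (Function.Embedding.sigmaMk i)

lemma sigma_adj {x y : Σ i, W i} :
    (sigma H).Adj x y ↔ ∃ i a b, (H i).Adj a b ∧ ⟨i, a⟩ = x ∧ ⟨i, b⟩ = y := by
  simp [sigma]

lemma sigma_adj_mk {i : ι} {a b : W i} :
    (sigma H).Adj ⟨i, a⟩ ⟨i, b⟩ ↔ (H i).Adj a b := by
  refine sigma_adj.trans ⟨?_, fun h => ⟨i, a, b, h, rfl, rfl⟩⟩
  rintro ⟨j, a', b', h, ha, hb⟩
  obtain ⟨rfl, ha⟩ := Sigma.mk.inj_iff.1 ha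
  obtain ⟨-, hb⟩ := Sigma.mk.inj_iff.1 hb
  rwa [← eq_of_heq ha, ← eq_of_heq hb]

lemma fst_eq_of_sigma_adj {x y : Σ i, W i} (h : (sigma H).Adj x y) : x.1 = y.1 := by
  obtain ⟨i, a, b, -, rfl, rfl⟩ := sigma_adj.1 h
  rfl

def sigmaEmbedding (i : ι) : H i ↪g sigma H where
  toEmbedding := Function.Embedding.sigmaMk i
  map_rel_iff' := sigma_adj_mk

lemma Connected.exists_isContained_of_isContained_sigma {α : Type*} {F : SimpleGraph α}
    (hF : F.Connected) (h : F ⊑ sigma H) : ∃ i, F ⊑ H i := by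
  obtain ⟨φ⟩ := h
  obtain ⟨a₀⟩ := hF.nonempty
  obtain ⟨i, hi⟩ : ∃ i, (φ a₀).1 = i := ⟨_, rfl⟩
  have hwalk {a b : α} (p : F.Walk a b) : (φ a).1 = (φ b).1 := by
    induction p with
    | nil => rfl
    | cons hadj _ ih => exact (fst_eq_of_sigma_adj (φ.toHom.map_adj hadj)).trans ih
  have hmk (a : α) : ∃ x : W i, φ a = ⟨i, x⟩ := by
    obtain ⟨p⟩ := hF.preconnected a a₀
    have hfst : (φ a).1 = i := (hwalk p).trans hi
    generalize φ a = y at hfst ⊢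
    obtain ⟨j, y⟩ := y
    subst hfst
    exact ⟨y, rfl⟩
  choose ψ hψ using hmk
  refine ⟨i, ⟨⟨ψ, fun {a b} hab => ?_⟩, fun a b (hab : ψ a = ψ b) =>
    φ.injective ?_⟩⟩
  · have := φ.toHom.map_adj hab
    rwa [Copy.toHom_apply, Copy.toHom_apply, hψ a, hψ b, sigma_adj_mk] at this
  · simp only [Copy.toHom_apply, hψ, hab]

lemma egirth_sigma : (sigma H).egirth = ⨅ i, (H i).egirth := by
  refine le_antisymm (le_iInf fun i => (sigmaEmbedding i).isContained.egirth_le) ?_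
  refine le_egirth.2 fun x w hw => ?_
  have h3 := hw.three_le_length
  obtain ⟨L, hL⟩ : ∃ L, w.length = L + 1 := ⟨w.length - 1, by omega⟩
  have hC := (cycleGraph_isContained_iff (by omega)).2 ⟨x, w, hw, hL⟩
  obtain ⟨i, hi⟩ := cycleGraph_connected.exists_isContained_of_isContained_sigma hC
  obtain ⟨v, p, hp, hpL⟩ := (cycleGraph_isContained_iff (by omega)).1 hi
  exact iInf_le_of_le i (hL ▸ hpL ▸ egirth_le_length hp)

lemma Colorable.of_sigma {n : ℕ} (h : (sigma H).Colorable n) (i : ι) : (H i).Colorable n :=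
  h.of_hom (sigmaEmbedding i).toHom

end Sigma

end SimpleGraph

/-! ### Ultraproducts -/

section Ultraproduct

variable {u : Ultrafilter ℕ} {V : ℕ → Type*} {G : ∀ n, SimpleGraph (V n)}

lemma upGraph_adj_mk {f g : ∀ n, V n} :
    (upGraph u V G).Adj ⟦f⟧ ⟦g⟧ ↔ ∀ᶠ n in (u : Filter ℕ), (G n).Adj (f n) (g n) :=
  Iff.rfl

lemma upSetoid_mk_eq_mk_iff {f g : ∀ n, V n} :
    (⟦f⟧ : Quotient (upSetoid u V)) = ⟦g⟧ ↔ ∀ᶠ n in (u : Filter ℕ), f n = g n :=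
  Quotient.eq

lemma SimpleGraph.IsContained.eventually_of_upGraph {W : Type*} [Finite W] {F : SimpleGraph W}
    (h : F ⊑ upGraph u V G) : ∀ᶠ n in (u : Filter ℕ), F ⊑ G n := by
  obtain ⟨φ⟩ := h
  set f : W → ∀ n, V n := fun w => (φ w).out
  have hf (w : W) : ⟦f w⟧ = φ w := Quotient.out_eq _
  have hcopy : ∀ᶠ n in (u : Filter ℕ), ∀ w w',
      (F.Adj w w' → (G n).Adj (f w n) (f w' n)) ∧ (w ≠ w' → f w n ≠ f w' n) := by
    simp only [eventually_all, eventually_and]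
    refine fun w w' => ⟨fun hadj => ?_, fun hne => ?_⟩
    · rw [← upGraph_adj_mk, hf, hf]
      exact φ.toHom.map_adj hadj
    · rw [Ultrafilter.eventually_not, ← upSetoid_mk_eq_mk_iff, hf, hf]
      exact φ.injective.ne hne
  refine hcopy.mono fun n hn => ⟨⟨⟨fun w => f w n, fun hadj => (hn _ _).1 hadj⟩, ?_⟩⟩
  intro w w' heq
  by_contra hne
  exact (hn w w').2 hne heq

lemma upGraph_isAcyclic
    (h : ∀ m : ℕ, ∀ᶠ n in (u : Filter ℕ), (m : ℕ∞) < (G n).egirth) :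
    (upGraph u V G).IsAcyclic := by
  refine isAcyclic_iff_free_cycleGraph.2 fun L hL hC => ?_
  obtain ⟨n, hC, hlt⟩ := (hC.eventually_of_upGraph.and (h L)).exists
  exact lt_egirth_iff.1 hlt L hL le_rfl hC

end Ultraproduct

theorem exists_finite_lt_egirth_not_colorable (g k : ℕ) :
    ∃ (V : Type) (_ : Finite V) (H : SimpleGraph V),
      (g : ℕ∞) < H.egirth ∧ ¬ H.Colorable k := by
  obtain ⟨N, t, a, M, hM, hN, hgN, haN, hC, hka⟩ := exists_erdos_parameters g k
  obtain ⟨ω, hcyc, hind⟩ :=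
    exists_labelGraph_two_mul_sum_card_labelledCycles_lt_indepSetFree (V := Fin N) (t := t) g
      (a + 1) (by simpa [Sym2.card] using erdos_count_bound_lt hM hN hgN haN hC)
  obtain ⟨D, hD, hgirth⟩ := (labelGraph ω).exists_card_le_lt_egirth_induce_compl g
  refine ⟨_, inferInstance, _, hgirth, fun hcol => ?_⟩
  rw [Fintype.card_fin] at hcyc
  rw [mul_assoc] at hka
  obtain ⟨s, hs⟩ := hcol.exists_isNIndepSet (a := a) (by
    rw [Fintype.card_compl_set]
    simp only [Fintype.card_fin, Finset.coe_sort_coe, Fintype.card_coe]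
    omega)
  exact hind.comap (Embedding.induce _) s hs

/-- there is a family of simple graphs, each of infinite chromatic number,
whose ultraproduct over any nonprincipal ultrafilter on ℕ is acyclic, hence 2-colourable. -/
theorem exists_infinite_chromatic_family_with_acyclic_ultraproduct :
    ∃ (V : ℕ → Type) (G : ∀ n, SimpleGraph (V n)),
      (∀ n : ℕ, ∀ m : ℕ, ¬ (G n).Colorable m) ∧
      (∀ u : Ultrafilter ℕ, (∀ s : Set ℕ, sᶜ.Finite → s ∈ u) →
        (upGraph u V G).IsAcyclic ∧ (upGraph u V G).Colorable 2) := by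
  choose W _ H hH using exists_finite_lt_egirth_not_colorable
  refine ⟨fun n => Σ k, W n k, fun n => sigma (H n),
    fun n m hcol => (hH n m).2 (hcol.of_sigma m), fun u hu => ?_⟩
  have hacyc : (upGraph u _ fun n => sigma (H n)).IsAcyclic := by
    refine upGraph_isAcyclic fun m => mem_of_superset (hu (Set.Ici m) (by simp))
      fun n (hn : m ≤ n) => show (m : ℕ∞) < _ from ?_
    rw [egirth_sigma]
    refine lt_of_lt_of_le ?_
      (le_iInf fun k => (ENat.add_one_le_iff (ENat.natCast_ne_top n)).2 (hH n k).1)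
    exact_mod_cast Nat.lt_succ_of_le hn
  exact ⟨hacyc, hacyc.colorable_two⟩
end
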